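/- arXiv:1009.4538 — 6 statements merged into one kernel-verified Lean document; each statement's English description precedes it below -/
import Mathlib

section
/- For every smooth zero-mean M-periodic function ω, writing ω = ω̄ + ω̃ with ω̄ the zonal part and ω̃ the non-zonal part, one has the identity (B(ω,ω), ω̃)_{L²} = −(B(ω̃,ω̃), ω̄)_{L²}. -/
noncomputable section

open scoped Real

/-- The physical wavenumber in the dual lattice `Z_L` attached to the integer index `n`. -/
def wn (L₁ L₂ : ℝ) (n : ℤ × ℤ) : ℝ × ℝ :=
  (2 * Real.pi * (n.1 : ℝ) / L₁, 2 * Real.pi * (n.2 : ℝ) / L₂)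

/-- `|k|²` for a wavenumber `k ∈ ℝ²`. -/
def ksq (k : ℝ × ℝ) : ℝ := k.1 ^ 2 + k.2 ^ 2

/-- The wedge product `j ∧ k = j₁k₂ − j₂k₁`. -/
def wedge (j k : ℝ × ℝ) : ℝ := j.1 * k.2 - j.2 * k.1

/-- Squared `Hˢ` norm `‖(−Δ)^{s/2} w‖²_{L²}` of a zero-mean field on the torus
`M = [0,L₁] × [−L₂/2,L₂/2]`, computed from its Fourier coefficients `c` via Parseval. -/
def hsq (L₁ L₂ : ℝ) (s : ℝ) (c : ℤ × ℤ → ℂ) : ℝ :=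
  (L₁ * L₂) * ∑' n : ℤ × ℤ, ksq (wn L₁ L₂ n) ^ s * ‖c n‖ ^ 2

/-- The `L²(M)` inner product `(a,b)_{L²} = ∫_M a conj(b)`, via Fourier coefficients. -/
def ip (L₁ L₂ : ℝ) (a b : ℤ × ℤ → ℂ) : ℂ :=
  ((L₁ * L₂ : ℝ) : ℂ) * ∑' n : ℤ × ℤ, a n * (starRingEnd ℂ) (b n)

/-- Interaction coefficient `(j∧k)/|j|²` of the nonlinearity `B`. -/
def bcoef (L₁ L₂ : ℝ) (j k : ℤ × ℤ) : ℝ :=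
  if j = 0 then 0 else wedge (wn L₁ L₂ j) (wn L₁ L₂ k) / ksq (wn L₁ L₂ j)

/-- Fourier coefficients of `B(a,b) := (∇⊥Δ⁻¹a)·∇b` (a convolution). -/
def bconv (L₁ L₂ : ℝ) (a b : ℤ × ℤ → ℂ) (l : ℤ × ℤ) : ℂ :=
  ∑' p : ℤ × ℤ, ((bcoef L₁ L₂ p (l - p) : ℝ) : ℂ) * a p * b (l - p)

/-- `Ω_k := −k₁/|k|²`, i times the eigenvalue of `L = ∂ₓΔ⁻¹` at wavenumber `k`. -/
def Om (L₁ L₂ : ℝ) (n : ℤ × ℤ) : ℝ := -(wn L₁ L₂ n).1 / ksq (wn L₁ L₂ n)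

/-- Rapid decay of Fourier coefficients: the field is smooth on the torus. -/
def regular (L₁ L₂ : ℝ) (c : ℤ × ℤ → ℂ) : Prop :=
  ∀ s : ℝ, Summable fun n : ℤ × ℤ => (1 + ksq (wn L₁ L₂ n)) ^ s * ‖c n‖ ^ 2

/-- The Fourier coefficients of a real-valued field. -/
def realField (c : ℤ × ℤ → ℂ) : Prop := ∀ n, c (-n) = (starRingEnd ℂ) (c n)

/-- Non-zonal (fast) part: Fourier modes with `k₁ ≠ 0`. -/
def tilde (c : ℤ × ℤ → ℂ) : ℤ × ℤ → ℂ := fun n => if n.1 = 0 then 0 else c n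

/-- Zonal (slow) part: Fourier modes with `k₁ = 0`. -/
def zbar (c : ℤ × ℤ → ℂ) : ℤ × ℤ → ℂ := fun n => if n.1 = 0 then c n else 0

/-- The Poincaré constant `c₀` of the torus (the smallest nonzero wavenumber). -/
def poin (L₁ L₂ : ℝ) : ℝ := min (2 * Real.pi / L₁) (2 * Real.pi / L₂)

/-- The coefficients of `∂ₓ c`. -/
def dx (L₁ L₂ : ℝ) (c : ℤ × ℤ → ℂ) : ℤ × ℤ → ℂ :=
  fun n => Complex.I * (((wn L₁ L₂ n).1 : ℝ) : ℂ) * c n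

/-- The coefficients of `∂_y c`. -/
def dy (L₁ L₂ : ℝ) (c : ℤ × ℤ → ℂ) : ℤ × ℤ → ℂ :=
  fun n => Complex.I * (((wn L₁ L₂ n).2 : ℝ) : ℂ) * c n

/-- The coefficients of `Δc`. -/
def lap (L₁ L₂ : ℝ) (c : ℤ × ℤ → ℂ) : ℤ × ℤ → ℂ :=
  fun n => -((ksq (wn L₁ L₂ n) : ℝ) : ℂ) * c n

/-- The operator `I_Ω`: Fourier multiplier with symbol `1/(iΩ_k) = i|k|²/k₁` on `k₁ ≠ 0`. -/
def iOm (L₁ L₂ : ℝ) (c : ℤ × ℤ → ℂ) : ℤ × ℤ → ℂ := fun n =>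
  if n.1 = 0 then 0
  else Complex.I * ((ksq (wn L₁ L₂ n) / (wn L₁ L₂ n).1 : ℝ) : ℂ) * c n

/-- `B_{jkl} = |M| (j∧k)/|j|²` when `j + k = l`, and `0` otherwise. -/
def bco (L₁ L₂ : ℝ) (nj nk nl : ℤ × ℤ) : ℝ :=
  if nj + nk = nl then L₁ * L₂ * wedge (wn L₁ L₂ nj) (wn L₁ L₂ nk) / ksq (wn L₁ L₂ nj)
  else 0

/-- Dot product on `ℝ²`. -/
def dotR (a b : ℝ × ℝ) : ℝ := a.1 * b.1 + a.2 * b.2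

/-- The complex exponential `e^{i k·x}`. -/
def expf (k : ℝ × ℝ) (x : ℝ × ℝ) : ℂ := Complex.exp (Complex.I * ((dotR k x : ℝ) : ℂ))

/-- Directional derivative `∂_v g (x)`. -/
def pd (v : ℝ × ℝ) (g : ℝ × ℝ → ℂ) (x : ℝ × ℝ) : ℂ := fderiv ℝ g x v

/-- `Δ⁻¹ e^{i j·x} := −e^{i j·x}/|j|²`. -/
def invLapExp (j : ℝ × ℝ) : ℝ × ℝ → ℂ := fun x => -expf j x / ((ksq j : ℝ) : ℂ)

/-- `B(e^{ij·x}, e^{ik·x}) = (∇⊥Δ⁻¹e^{ij·x})·∇e^{ik·x}` pointwise,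
with `∇⊥ = (−∂_y, ∂_x)`. -/
def Bpt (j k : ℝ × ℝ) (x : ℝ × ℝ) : ℂ :=
  -pd (0, 1) (invLapExp j) x * pd (1, 0) (expf k) x
    + pd (1, 0) (invLapExp j) x * pd (0, 1) (expf k) x

/-- The `L^∞(M)` norm of the field with Fourier coefficients `c`. -/
def linf (L₁ L₂ : ℝ) (c : ℤ × ℤ → ℂ) : ℝ :=
  ⨆ x : ℝ × ℝ, ‖∑' n : ℤ × ℤ, c n * Complex.exp (Complex.I * ((dotR (wn L₁ L₂ n) x : ℝ) : ℂ))‖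

/-- Euclidean norm of an integer lattice point. -/
def zn (k : ℤ × ℤ) : ℝ := Real.sqrt ((k.1 : ℝ) ^ 2 + (k.2 : ℝ) ^ 2)

/-- A classical solution `ω` (in Fourier representation) of the β-plane vorticity equation
`∂ₜω + B(ω,ω) + (1/ε)Lω + μAω = f` on `M × (0,∞)`:
smooth, `M`-periodic, real-valued and of zero spatial mean for every `t`,
with `f` smooth, periodic and zero-mean.  Mode by mode the equation reads
`d/dt ω_l = f_l − B(ω,ω)_l − (iΩ_l/ε) ω_l − μ|l|² ω_l`. -/
structure IsSolution (L₁ L₂ μ ε : ℝ) (ω f : ℝ → ℤ × ℤ → ℂ) : Prop where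
  mean_ω : ∀ t, ω t 0 = 0
  mean_f : ∀ t, f t 0 = 0
  real_ω : ∀ t, realField (ω t)
  real_f : ∀ t, realField (f t)
  reg_ω : ∀ t, regular L₁ L₂ (ω t)
  reg_f : ∀ t, regular L₁ L₂ (f t)
  cont_ω : ∀ n, Continuous fun t => ω t n
  eqn : ∀ t, 0 < t → ∀ l : ℤ × ℤ,
    HasDerivAt (fun τ => ω τ l)
      (f t l - bconv L₁ L₂ (ω t) (ω t) l
        - Complex.I * ((Om L₁ L₂ l : ℝ) : ℂ) / ((ε : ℝ) : ℂ) * ω t l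
        - ((μ : ℝ) : ℂ) * ((ksq (wn L₁ L₂ l) : ℝ) : ℂ) * ω t l) t


namespace Statement7Aux

lemma ksq_nonneg (k : ℝ × ℝ) : 0 ≤ ksq k := by
  unfold ksq; positivity

lemma sum_nat_inv_sq_add_one : Summable fun n : ℕ => ((n : ℝ) ^ 2 + 1)⁻¹ := by
  have h2 : Summable fun n : ℕ => (1 : ℝ) / (n : ℝ) ^ 2 :=
    Real.summable_one_div_nat_pow.2 one_lt_two
  have h3 : Summable fun n : ℕ => (1 : ℝ) / ((n : ℝ) + 1) ^ 2 := by
    have h := (summable_nat_add_iff (f := fun n : ℕ => (1 : ℝ) / (n : ℝ) ^ 2) 1).2 h2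
    refine h.congr fun n => ?_
    push_cast; ring
  refine Summable.of_nonneg_of_le (fun n => by positivity) (fun n => ?_) (h3.mul_left 2)
  have h4 : ((n : ℝ) + 1) ^ 2 ≤ 2 * ((n : ℝ) ^ 2 + 1) := by
    nlinarith [sq_nonneg ((n : ℝ) - 1)]
  calc ((n : ℝ) ^ 2 + 1)⁻¹ ≤ (((n : ℝ) + 1) ^ 2 / 2)⁻¹ :=
        inv_anti₀ (by positivity) (by linarith)
    _ = 2 * (1 / ((n : ℝ) + 1) ^ 2) := by rw [inv_div]; ring

lemma sum_int_inv_sq_add_one : Summable fun m : ℤ => ((m : ℝ) ^ 2 + 1)⁻¹ := by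
  refine Summable.of_nat_of_neg (sum_nat_inv_sq_add_one.congr fun n => ?_)
    (sum_nat_inv_sq_add_one.congr fun n => ?_) <;>
  · push_cast; ring_nf

lemma sum_int_inv_one_add_mul_sq {c : ℝ} (hc : 0 < c) :
    Summable fun m : ℤ => (1 + c * (m : ℝ) ^ 2)⁻¹ := by
  refine Summable.of_nonneg_of_le (fun m => by positivity) (fun m => ?_)
    (sum_int_inv_sq_add_one.mul_left (max 1 c⁻¹))
  have h1 : (1 : ℝ) ≤ max 1 c⁻¹ := le_max_left _ _
  have h3 : (1 : ℝ) ≤ c * max 1 c⁻¹ := by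
    have h := mul_le_mul_of_nonneg_left (le_max_right 1 c⁻¹) hc.le
    rwa [mul_inv_cancel₀ hc.ne'] at h
  have key : ((m : ℝ) ^ 2 + 1) * (max 1 c⁻¹)⁻¹ ≤ 1 + c * (m : ℝ) ^ 2 := by
    rw [← div_eq_mul_inv, div_le_iff₀ (by positivity)]
    nlinarith [sq_nonneg (m : ℝ), mul_le_mul_of_nonneg_right h3 (sq_nonneg (m : ℝ))]
  calc (1 + c * (m : ℝ) ^ 2)⁻¹ ≤ (((m : ℝ) ^ 2 + 1) * (max 1 c⁻¹)⁻¹)⁻¹ :=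
        inv_anti₀ (by positivity) key
    _ = max 1 c⁻¹ * ((m : ℝ) ^ 2 + 1)⁻¹ := by rw [mul_inv, inv_inv, mul_comm]

lemma ksq_wn_expand (L₁ L₂ : ℝ) (n : ℤ × ℤ) :
    ksq (wn L₁ L₂ n)
      = (2 * Real.pi / L₁) ^ 2 * (n.1 : ℝ) ^ 2 + (2 * Real.pi / L₂) ^ 2 * (n.2 : ℝ) ^ 2 := by
  simp only [ksq, wn]; ring

lemma lattice_summable (L₁ L₂ : ℝ) (hL₁ : 0 < L₁) (hL₂ : 0 < L₂) :
    Summable fun n : ℤ × ℤ => ((1 + ksq (wn L₁ L₂ n))⁻¹) ^ 2 := by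
  have hc : 0 < min ((2 * Real.pi / L₁) ^ 2) ((2 * Real.pi / L₂) ^ 2) :=
    lt_min (by positivity) (by positivity)
  set c := min ((2 * Real.pi / L₁) ^ 2) ((2 * Real.pi / L₂) ^ 2) with hcdef
  have hs := (sum_int_inv_one_add_mul_sq hc).mul_of_nonneg (sum_int_inv_one_add_mul_sq hc)
    (fun m => by positivity) (fun m => by positivity)
  refine Summable.of_nonneg_of_le (fun n => by positivity) (fun n => ?_) hs
  have hKn : 0 ≤ ksq (wn L₁ L₂ n) := ksq_nonneg _
  have h1 : c ≤ (2 * Real.pi / L₁) ^ 2 := min_le_left _ _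
  have h2 : c ≤ (2 * Real.pi / L₂) ^ 2 := min_le_right _ _
  have hx := sq_nonneg (n.1 : ℝ)
  have hy := sq_nonneg (n.2 : ℝ)
  have hS : c * (n.1 : ℝ) ^ 2 + c * (n.2 : ℝ) ^ 2 ≤ ksq (wn L₁ L₂ n) := by
    rw [ksq_wn_expand]
    nlinarith [mul_le_mul_of_nonneg_right h1 hx, mul_le_mul_of_nonneg_right h2 hy]
  have h9 : (1 + c * (n.1 : ℝ) ^ 2) * (1 + c * (n.2 : ℝ) ^ 2)
      ≤ (1 + (c * (n.1 : ℝ) ^ 2 + c * (n.2 : ℝ) ^ 2)) ^ 2 := by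
    nlinarith [mul_nonneg (mul_nonneg hc.le hx) (mul_nonneg hc.le hy),
      mul_nonneg hc.le hx, mul_nonneg hc.le hy]
  have h10 : (1 + (c * (n.1 : ℝ) ^ 2 + c * (n.2 : ℝ) ^ 2)) ^ 2 ≤ (1 + ksq (wn L₁ L₂ n)) ^ 2 := by
    apply pow_le_pow_left₀ (by positivity) (by linarith)
  have key : (1 + c * (n.1 : ℝ) ^ 2) * (1 + c * (n.2 : ℝ) ^ 2) ≤ (1 + ksq (wn L₁ L₂ n)) ^ 2 :=
    h9.trans h10
  calc ((1 + ksq (wn L₁ L₂ n))⁻¹) ^ 2 = ((1 + ksq (wn L₁ L₂ n)) ^ 2)⁻¹ := by rw [← inv_pow]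
    _ ≤ ((1 + c * (n.1 : ℝ) ^ 2) * (1 + c * (n.2 : ℝ) ^ 2))⁻¹ :=
        inv_anti₀ (by positivity) key
    _ = (1 + c * (n.1 : ℝ) ^ 2)⁻¹ * (1 + c * (n.2 : ℝ) ^ 2)⁻¹ := by rw [mul_inv]

lemma summable_weight (L₁ L₂ : ℝ) (hL₁ : 0 < L₁) (hL₂ : 0 < L₂) (ω : ℤ × ℤ → ℂ)
    (hreg : regular L₁ L₂ ω) (m : ℕ) :
    Summable fun n : ℤ × ℤ => (1 + ksq (wn L₁ L₂ n)) ^ m * ‖ω n‖ := by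
  have hp2 : Summable fun n : ℤ × ℤ => (1 + ksq (wn L₁ L₂ n)) ^ (2 * m + 2) * ‖ω n‖ ^ 2 := by
    have h := hreg ((2 * m + 2 : ℕ) : ℝ)
    refine h.congr fun n => ?_
    rw [Real.rpow_natCast]
  have hlat := lattice_summable L₁ L₂ hL₁ hL₂
  refine Summable.of_nonneg_of_le (fun n => ?_) (fun n => ?_) ((hlat.add hp2).mul_left (1 / 2))
  · exact mul_nonneg (pow_nonneg (by linarith [ksq_nonneg (wn L₁ L₂ n)]) m) (norm_nonneg _)
  · have hK := ksq_nonneg (wn L₁ L₂ n)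
    set x := 1 + ksq (wn L₁ L₂ n) with hxdef
    have hx : 0 < x := by rw [hxdef]; linarith
    have ha : 0 ≤ ‖ω n‖ := norm_nonneg _
    have hid : x ^ m * ‖ω n‖ = x⁻¹ * (x ^ (m + 1) * ‖ω n‖) := by
      field_simp
      ring
    have hAM : x⁻¹ * (x ^ (m + 1) * ‖ω n‖)
        ≤ ((x⁻¹) ^ 2 + (x ^ (m + 1) * ‖ω n‖) ^ 2) / 2 := by
      nlinarith [sq_nonneg (x⁻¹ - x ^ (m + 1) * ‖ω n‖)]
    have hexp : (m + 1) * 2 = 2 * m + 2 := by ring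
    have hsq : (x ^ (m + 1) * ‖ω n‖) ^ 2 = x ^ (2 * m + 2) * ‖ω n‖ ^ 2 := by
      rw [mul_pow, ← pow_mul, hexp]
    rw [hid]
    rw [hsq] at hAM
    linarith

lemma c_le_ksq (L₁ L₂ : ℝ) (hL₁ : 0 < L₁) (hL₂ : 0 < L₂) {p : ℤ × ℤ} (hp : p ≠ 0) :
    min ((2 * Real.pi / L₁) ^ 2) ((2 * Real.pi / L₂) ^ 2) ≤ ksq (wn L₁ L₂ p) := by
  have hp2 : (1 : ℝ) ≤ (p.1 : ℝ) ^ 2 + (p.2 : ℝ) ^ 2 := by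
    have h : p.1 ≠ 0 ∨ p.2 ≠ 0 := by
      by_contra h
      push_neg at h
      exact hp (Prod.ext h.1 h.2)
    have hZ : (1 : ℤ) ≤ p.1 ^ 2 + p.2 ^ 2 := by
      rcases h with h | h
      · nlinarith [Int.one_le_abs h, sq_abs p.1, sq_nonneg p.2, abs_nonneg p.1]
      · nlinarith [Int.one_le_abs h, sq_abs p.2, sq_nonneg p.1, abs_nonneg p.2]
    exact_mod_cast hZ
  have h1 := min_le_left ((2 * Real.pi / L₁) ^ 2) ((2 * Real.pi / L₂) ^ 2)
  have h2 := min_le_right ((2 * Real.pi / L₁) ^ 2) ((2 * Real.pi / L₂) ^ 2)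
  have h0 : 0 ≤ min ((2 * Real.pi / L₁) ^ 2) ((2 * Real.pi / L₂) ^ 2) :=
    le_min (by positivity) (by positivity)
  rw [ksq_wn_expand]
  nlinarith [mul_le_mul_of_nonneg_right h1 (sq_nonneg (p.1 : ℝ)),
    mul_le_mul_of_nonneg_right h2 (sq_nonneg (p.2 : ℝ)),
    mul_le_mul_of_nonneg_left hp2 h0]

lemma abs_bcoef_le (L₁ L₂ : ℝ) (hL₁ : 0 < L₁) (hL₂ : 0 < L₂) (p k : ℤ × ℤ) :
    |bcoef L₁ L₂ p k| ≤
      (Real.sqrt (min ((2 * Real.pi / L₁) ^ 2) ((2 * Real.pi / L₂) ^ 2)))⁻¹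
        * (1 + ksq (wn L₁ L₂ k)) := by
  have hc : 0 < min ((2 * Real.pi / L₁) ^ 2) ((2 * Real.pi / L₂) ^ 2) :=
    lt_min (by positivity) (by positivity)
  have hkk : 0 ≤ ksq (wn L₁ L₂ k) := ksq_nonneg _
  rcases eq_or_ne p 0 with hp | hp
  · simp only [bcoef, if_pos hp, abs_zero]
    positivity
  · have hcK := c_le_ksq L₁ L₂ hL₁ hL₂ hp
    have hKp : 0 < ksq (wn L₁ L₂ p) := lt_of_lt_of_le hc hcK
    rw [bcoef, if_neg hp, abs_div, abs_of_pos hKp]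
    have hw2 : wedge (wn L₁ L₂ p) (wn L₁ L₂ k) ^ 2 ≤ ksq (wn L₁ L₂ p) * ksq (wn L₁ L₂ k) := by
      simp only [wedge, ksq]
      nlinarith [sq_nonneg ((wn L₁ L₂ p).1 * (wn L₁ L₂ k).1 + (wn L₁ L₂ p).2 * (wn L₁ L₂ k).2)]
    have hw : |wedge (wn L₁ L₂ p) (wn L₁ L₂ k)| ≤
        Real.sqrt (ksq (wn L₁ L₂ p)) * Real.sqrt (ksq (wn L₁ L₂ k)) := by
      rw [← Real.sqrt_sq_eq_abs, ← Real.sqrt_mul hKp.le]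
      exact Real.sqrt_le_sqrt hw2
    have hsp : 0 < Real.sqrt (ksq (wn L₁ L₂ p)) := Real.sqrt_pos.2 hKp
    have hsc : 0 < Real.sqrt (min ((2 * Real.pi / L₁) ^ 2) ((2 * Real.pi / L₂) ^ 2)) :=
      Real.sqrt_pos.2 hc
    calc |wedge (wn L₁ L₂ p) (wn L₁ L₂ k)| / ksq (wn L₁ L₂ p)
        ≤ (Real.sqrt (ksq (wn L₁ L₂ p)) * Real.sqrt (ksq (wn L₁ L₂ k))) / ksq (wn L₁ L₂ p) := by
          gcongr
      _ = Real.sqrt (ksq (wn L₁ L₂ k)) / Real.sqrt (ksq (wn L₁ L₂ p)) := by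
          have hmul : Real.sqrt (ksq (wn L₁ L₂ p)) * Real.sqrt (ksq (wn L₁ L₂ p))
              = ksq (wn L₁ L₂ p) := Real.mul_self_sqrt hKp.le
          rw [div_eq_div_iff hKp.ne' hsp.ne']
          linear_combination Real.sqrt (ksq (wn L₁ L₂ k)) * hmul
      _ ≤ Real.sqrt (ksq (wn L₁ L₂ k))
          / Real.sqrt (min ((2 * Real.pi / L₁) ^ 2) ((2 * Real.pi / L₂) ^ 2)) := by
          gcongr
      _ ≤ (1 + ksq (wn L₁ L₂ k))
          / Real.sqrt (min ((2 * Real.pi / L₁) ^ 2) ((2 * Real.pi / L₂) ^ 2)) := by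
          gcongr
          nlinarith [Real.sq_sqrt hkk, Real.sqrt_nonneg (ksq (wn L₁ L₂ k))]
      _ = _ := by rw [div_eq_mul_inv, mul_comm]

/-- The summand of the trilinear form `(B(ω,ω), ω)` over the product index set. -/
def Gfun (L₁ L₂ : ℝ) (ω : ℤ × ℤ → ℂ) (q : (ℤ × ℤ) × (ℤ × ℤ)) : ℂ :=
  ((bcoef L₁ L₂ q.2 (q.1 - q.2) : ℝ) : ℂ) * ω q.2 * ω (q.1 - q.2) * (starRingEnd ℂ) (ω q.1)

lemma Gfun_apply (L₁ L₂ : ℝ) (ω : ℤ × ℤ → ℂ) (l p : ℤ × ℤ) :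
    Gfun L₁ L₂ ω (l, p)
      = ((bcoef L₁ L₂ p (l - p) : ℝ) : ℂ) * ω p * ω (l - p) * (starRingEnd ℂ) (ω l) := rfl

lemma bcoef_neg (L₁ L₂ : ℝ) (p l : ℤ × ℤ) :
    bcoef L₁ L₂ p (-l) = - bcoef L₁ L₂ p (l - p) := by
  rcases eq_or_ne p 0 with hp | hp
  · simp [bcoef, hp]
  · rw [bcoef, bcoef, if_neg hp, if_neg hp, ← neg_div]
    congr 1
    simp only [wedge, wn, Prod.fst_sub, Prod.snd_sub, Prod.fst_neg, Prod.snd_neg]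
    push_cast
    ring

lemma bcoef_zonal (L₁ L₂ : ℝ) {p l : ℤ × ℤ} (hl : l.1 = 0) (hp : p.1 = 0) :
    bcoef L₁ L₂ p (l - p) = 0 := by
  rcases eq_or_ne p 0 with h | h
  · simp [bcoef, h]
  · rw [bcoef, if_neg h]
    have hwz : wedge (wn L₁ L₂ p) (wn L₁ L₂ (l - p)) = 0 := by
      simp only [wedge, wn, Prod.fst_sub, hl, hp]
      push_cast
      ring
    rw [hwz, zero_div]

end Statement7Aux

set_option maxHeartbeats 2000000

/-- identity (3.8) of the paper.  For a smooth zero-mean field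
`ω = ω̄ + ω̃` on the torus, `(B(ω,ω), ω̃)_{L²} = −(B(ω̃,ω̃), ω̄)_{L²}`. -/
theorem statement7 (L₁ L₂ : ℝ) (hL₁ : 0 < L₁) (hL₂ : 0 < L₂) (ω : ℤ × ℤ → ℂ)
    (hmean : ω 0 = 0) (hreal : realField ω) (hreg : regular L₁ L₂ ω) :
    ip L₁ L₂ (bconv L₁ L₂ ω ω) (tilde ω)
      = -ip L₁ L₂ (bconv L₁ L₂ (tilde ω) (tilde ω)) (zbar ω) := by
  classical
  have hc : 0 < min ((2 * Real.pi / L₁) ^ 2) ((2 * Real.pi / L₂) ^ 2) :=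
    lt_min (by positivity) (by positivity)
  set c2 : ℝ := (Real.sqrt (min ((2 * Real.pi / L₁) ^ 2) ((2 * Real.pi / L₂) ^ 2)))⁻¹
    with hc2def
  have hc2 : 0 ≤ c2 := by rw [hc2def]; positivity
  have ha1 : Summable fun n : ℤ × ℤ => ‖ω n‖ := by
    have h := Statement7Aux.summable_weight L₁ L₂ hL₁ hL₂ ω hreg 0
    simpa using h
  have hb1 : Summable fun n : ℤ × ℤ => (1 + ksq (wn L₁ L₂ n)) ^ 1 * ‖ω n‖ :=
    Statement7Aux.summable_weight L₁ L₂ hL₁ hL₂ ω hreg 1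
  set A : ℝ := ∑' n : ℤ × ℤ, ‖ω n‖ with hAdef
  have hA : ∀ n, ‖ω n‖ ≤ A := fun n => Summable.le_tsum ha1 n fun j _ => norm_nonneg _
  set G := Statement7Aux.Gfun L₁ L₂ ω with hGdef
  -- summability of the trilinear family
  have hprod : Summable fun x : (ℤ × ℤ) × (ℤ × ℤ) =>
      ‖ω x.1‖ * ((1 + ksq (wn L₁ L₂ x.2)) ^ 1 * ‖ω x.2‖) :=
    ha1.mul_of_nonneg hb1 (fun n => norm_nonneg _)
      (fun n => mul_nonneg
        (pow_nonneg (by linarith [Statement7Aux.ksq_nonneg (wn L₁ L₂ n)]) 1) (norm_nonneg _))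
  have hinv2 : Function.Involutive
      (fun q : (ℤ × ℤ) × (ℤ × ℤ) => ((q.1, q.1 - q.2) : (ℤ × ℤ) × (ℤ × ℤ))) := by
    intro q
    cases q with
    | mk a b => simp [sub_sub_cancel]
  have hcomp : Summable fun q : (ℤ × ℤ) × (ℤ × ℤ) =>
      ‖ω q.1‖ * ((1 + ksq (wn L₁ L₂ (q.1 - q.2))) ^ 1 * ‖ω (q.1 - q.2)‖) := by
    have h := (Equiv.summable_iff (hinv2.toPerm _)).2 hprod
    exact h
  have hGnorm : Summable fun q : (ℤ × ℤ) × (ℤ × ℤ) => ‖G q‖ := by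
    refine Summable.of_nonneg_of_le (fun q => norm_nonneg _) (fun q => ?_)
      (hcomp.mul_left (c2 * A))
    have hnorm : ‖G q‖
        = |bcoef L₁ L₂ q.2 (q.1 - q.2)| * ‖ω q.2‖ * ‖ω (q.1 - q.2)‖ * ‖ω q.1‖ := by
      rw [hGdef]
      rw [show Statement7Aux.Gfun L₁ L₂ ω q
          = ((bcoef L₁ L₂ q.2 (q.1 - q.2) : ℝ) : ℂ) * ω q.2 * ω (q.1 - q.2)
            * (starRingEnd ℂ) (ω q.1) from rfl]
      rw [norm_mul, norm_mul, norm_mul, Complex.norm_real, Real.norm_eq_abs,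
        RCLike.norm_conj]
    rw [hnorm]
    have h1 : |bcoef L₁ L₂ q.2 (q.1 - q.2)| ≤ c2 * (1 + ksq (wn L₁ L₂ (q.1 - q.2))) := by
      rw [hc2def]
      exact Statement7Aux.abs_bcoef_le L₁ L₂ hL₁ hL₂ _ _
    have h2 : ‖ω q.2‖ ≤ A := hA _
    have hKq : 0 ≤ 1 + ksq (wn L₁ L₂ (q.1 - q.2)) := by
      linarith [Statement7Aux.ksq_nonneg (wn L₁ L₂ (q.1 - q.2))]
    calc |bcoef L₁ L₂ q.2 (q.1 - q.2)| * ‖ω q.2‖ * ‖ω (q.1 - q.2)‖ * ‖ω q.1‖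
        ≤ (c2 * (1 + ksq (wn L₁ L₂ (q.1 - q.2)))) * A * ‖ω (q.1 - q.2)‖ * ‖ω q.1‖ := by
          gcongr
      _ = (c2 * A) * (‖ω q.1‖ * ((1 + ksq (wn L₁ L₂ (q.1 - q.2))) ^ 1 * ‖ω (q.1 - q.2)‖)) := by
          ring
  have hGs : Summable G := Summable.of_norm hGnorm
  -- fiberwise sums: (B(ω,ω))_l conj(ω_l)
  set g : ℤ × ℤ → ℂ := fun l => bconv L₁ L₂ ω ω l * (starRingEnd ℂ) (ω l) with hgdef
  have hfib : ∀ l : ℤ × ℤ, HasSum (fun p => G (l, p)) (g l) := by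
    intro l
    have hinj : Function.Injective (fun p : ℤ × ℤ => ((l, p) : (ℤ × ℤ) × (ℤ × ℤ))) := by
      intro a b h
      simpa using h
    have h1 : Summable fun p => G (l, p) := hGs.comp_injective hinj
    have h2 : g l = ∑' p : ℤ × ℤ, G (l, p) := by
      rw [hgdef]
      simp only [bconv]
      rw [← tsum_mul_right]
      refine tsum_congr fun p => ?_
      rw [hGdef, Statement7Aux.Gfun_apply]
    rw [h2]
    exact h1.hasSum
  have hgsum : HasSum g (∑' q : (ℤ × ℤ) × (ℤ × ℤ), G q) := hGs.hasSum.prod_fiberwise hfib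
  -- the energy identity: the total sum vanishes by an involution
  have htot : ∑' q : (ℤ × ℤ) × (ℤ × ℤ), G q = 0 := by
    have hinv : Function.Involutive
        (fun q : (ℤ × ℤ) × (ℤ × ℤ) => ((q.2 - q.1, q.2) : (ℤ × ℤ) × (ℤ × ℤ))) := by
      intro q
      cases q with
      | mk a b => simp [sub_sub_cancel]
    have hneg : ∀ q : (ℤ × ℤ) × (ℤ × ℤ), G ((hinv.toPerm _) q) = - G q := by
      intro q
      obtain ⟨l, p⟩ := q
      have hcoe : (hinv.toPerm _) ((l, p) : (ℤ × ℤ) × (ℤ × ℤ))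
          = ((p - l, p) : (ℤ × ℤ) × (ℤ × ℤ)) := rfl
      rw [hcoe, hGdef, Statement7Aux.Gfun_apply, Statement7Aux.Gfun_apply]
      rw [show p - l - p = -l from by abel, Statement7Aux.bcoef_neg L₁ L₂ p l,
        ← hreal (p - l), neg_sub, ← hreal l]
      push_cast
      ring
    have hperm := Equiv.tsum_eq (hinv.toPerm _) G
    have h3 : ∑' q : (ℤ × ℤ) × (ℤ × ℤ), G ((hinv.toPerm _) q)
        = - ∑' q : (ℤ × ℤ) × (ℤ × ℤ), G q := by
      rw [tsum_congr hneg, tsum_neg]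
    have h4 : - ∑' q : (ℤ × ℤ) × (ℤ × ℤ), G q = ∑' q : (ℤ × ℤ) × (ℤ × ℤ), G q := by
      rw [← h3, hperm]
    linear_combination (-1 / 2 : ℂ) * h4
  have hg0 : HasSum g 0 := htot ▸ hgsum
  have hgsummable : Summable g := ⟨0, hg0⟩
  have hgtsum : ∑' l : ℤ × ℤ, g l = 0 := hg0.tsum_eq
  -- split according to zonal / non-zonal output modes
  set S : Set (ℤ × ℤ) := {l : ℤ × ℤ | l.1 = 0} with hSdef
  have hf1 : (fun l : ℤ × ℤ => bconv L₁ L₂ ω ω l * (starRingEnd ℂ) (tilde ω l))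
      = Sᶜ.indicator g := by
    funext l
    by_cases hl : l.1 = 0
    · have h1 : tilde ω l = 0 := by simp [tilde, hl]
      have h2 : l ∉ Sᶜ := by simp [hSdef, hl]
      rw [h1, Set.indicator_of_notMem h2]
      simp
    · have h1 : tilde ω l = ω l := by simp [tilde, hl]
      have h2 : l ∈ Sᶜ := by simp [hSdef, hl]
      rw [h1, Set.indicator_of_mem h2, hgdef]
  have hf2 : (fun l : ℤ × ℤ => bconv L₁ L₂ (tilde ω) (tilde ω) l * (starRingEnd ℂ) (zbar ω l))
      = S.indicator g := by
    funext l
    by_cases hl : l.1 = 0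
    · have h1 : zbar ω l = ω l := by simp [zbar, hl]
      have h3 : bconv L₁ L₂ (tilde ω) (tilde ω) l = bconv L₁ L₂ ω ω l := by
        simp only [bconv]
        refine tsum_congr fun p => ?_
        by_cases hp : p.1 = 0
        · rw [Statement7Aux.bcoef_zonal L₁ L₂ hl hp]
          simp
        · rw [show tilde ω p = ω p from by simp [tilde, hp],
            show tilde ω (l - p) = ω (l - p) from by simp [tilde, hl, hp]]
      rw [h1, h3, Set.indicator_of_mem (by simp [hSdef, hl]), hgdef]
    · have h1 : zbar ω l = 0 := by simp [zbar, hl]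
      rw [h1, Set.indicator_of_notMem (by simp [hSdef, hl])]
      simp
  have hsum1 : Summable (S.indicator g) := hgsummable.indicator S
  have hsum2 : Summable (Sᶜ.indicator g) := hgsummable.indicator Sᶜ
  have hpt : ∀ l : ℤ × ℤ, Sᶜ.indicator g l + S.indicator g l = g l := by
    intro l
    by_cases h : l ∈ S
    · rw [Set.indicator_of_mem h, Set.indicator_of_notMem (by simpa using h), zero_add]
    · rw [Set.indicator_of_notMem h, Set.indicator_of_mem (by simpa using h), add_zero]
  have hadd : (∑' l : ℤ × ℤ, Sᶜ.indicator g l) + (∑' l : ℤ × ℤ, S.indicator g l) = 0 := by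
    rw [← Summable.tsum_add hsum2 hsum1]
    rw [tsum_congr hpt]
    exact hgtsum
  simp only [ip]
  rw [hf1, hf2]
  rw [show (∑' l : ℤ × ℤ, Sᶜ.indicator g l) = - ∑' l : ℤ × ℤ, S.indicator g l from by
    linear_combination hadd]
  ring
end
end

section
/- For all j, k ∈ Z_L \ {0} with j + k = l and l₁ = 0 (l = (l₁,l₂)), one has the identity (j∧k)·(1/|j|² − 1/|k|²) = −l₂·(Ω_j + Ω_k); equivalently, B_{jkl} + B_{kjl} = −l₂·(Ω_j + Ω_k)·|M|, where |M| = L₁L₂ is the area of the domain. -/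
noncomputable section

open scoped Real

/-- identity (3.13) of the paper.  For nonzero `j, k ∈ Z_L` with
`j + k = l` and `l₁ = 0`:
`(j∧k)(1/|j|² − 1/|k|²) = −l₂(Ω_j + Ω_k)`, equivalently
`B_{jkl} + B_{kjl} = −l₂(Ω_j + Ω_k)|M|` with `|M| = L₁L₂`. -/
theorem statement8 (L₁ L₂ : ℝ) (hL₁ : 0 < L₁) (hL₂ : 0 < L₂)
    (nj nk nl : ℤ × ℤ) (hj : nj ≠ 0) (hk : nk ≠ 0) (hjk : nj + nk = nl)
    (hl1 : (wn L₁ L₂ nl).1 = 0) :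
    wedge (wn L₁ L₂ nj) (wn L₁ L₂ nk) *
        (1 / ksq (wn L₁ L₂ nj) - 1 / ksq (wn L₁ L₂ nk))
      = -(wn L₁ L₂ nl).2 * (Om L₁ L₂ nj + Om L₁ L₂ nk) ∧
    bco L₁ L₂ nj nk nl + bco L₁ L₂ nk nj nl
      = -(wn L₁ L₂ nl).2 * (Om L₁ L₂ nj + Om L₁ L₂ nk) * (L₁ * L₂) := by
  have hπ := Real.pi_pos
  have hksq : ∀ n : ℤ × ℤ, n ≠ 0 → ksq (wn L₁ L₂ n) ≠ 0 := by
    intro n hn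
    have hn' : n.1 ≠ 0 ∨ n.2 ≠ 0 := by
      by_contra h
      push_neg at h
      exact hn (Prod.ext h.1 h.2)
    apply ne_of_gt
    simp only [ksq, wn]
    rcases hn' with h | h
    · have h1 : (n.1 : ℝ) ≠ 0 := Int.cast_ne_zero.2 h
      have hp : (0:ℝ) < (2 * Real.pi * (n.1 : ℝ) / L₁) ^ 2 := by positivity
      nlinarith [sq_nonneg (2 * Real.pi * (n.2 : ℝ) / L₂)]
    · have h1 : (n.2 : ℝ) ≠ 0 := Int.cast_ne_zero.2 h
      have hp : (0:ℝ) < (2 * Real.pi * (n.2 : ℝ) / L₂) ^ 2 := by positivity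
      nlinarith [sq_nonneg (2 * Real.pi * (n.1 : ℝ) / L₁)]
  have hSj := hksq nj hj
  have hSk := hksq nk hk
  have hadd1 : (wn L₁ L₂ nj).1 + (wn L₁ L₂ nk).1 = (wn L₁ L₂ nl).1 := by
    simp only [wn, ← hjk, Prod.fst_add]
    push_cast; ring
  have hadd2 : (wn L₁ L₂ nj).2 + (wn L₁ L₂ nk).2 = (wn L₁ L₂ nl).2 := by
    simp only [wn, ← hjk, Prod.snd_add]
    push_cast; ring
  have hb1 : (wn L₁ L₂ nk).1 = -(wn L₁ L₂ nj).1 := by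
    have := hadd1; rw [hl1] at this; linarith
  have h1 : wedge (wn L₁ L₂ nj) (wn L₁ L₂ nk) *
      (1 / ksq (wn L₁ L₂ nj) - 1 / ksq (wn L₁ L₂ nk))
      = -(wn L₁ L₂ nl).2 * (Om L₁ L₂ nj + Om L₁ L₂ nk) := by
    rw [← hadd2]
    simp only [wedge, Om]
    rw [hb1]
    field_simp
    ring
  refine ⟨h1, ?_⟩
  have hkj : nk + nj = nl := by rw [add_comm]; exact hjk
  rw [bco, bco, if_pos hjk, if_pos hkj]
  have hw : wedge (wn L₁ L₂ nk) (wn L₁ L₂ nj) = -wedge (wn L₁ L₂ nj) (wn L₁ L₂ nk) := by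
    simp only [wedge]; ring
  rw [hw, ← h1]
  field_simp
  ring
end
end

section
/- Let j, k ∈ Z_L \ {0} with j + k = l, l₁ = 0 (l = (l₁,l₂)), and suppose the resonance condition Ω_j + Ω_k = 0 holds. Then B_{jkl} + B_{kjl} = 0. -/
noncomputable section

open scoped Real

/-!
Since `l₁ = 0` we have `j₁ = -k₁`, so the resonance condition reads `j₁ (1/|k|² - 1/|j|²) = 0`.
Either `j₁ = k₁ = 0`, and then `j ∧ k = 0`, or `1/|j|² = 1/|k|²`, and then the two terms
`(j ∧ k)/|j|²` and `(k ∧ j)/|k|² = -(j ∧ k)/|k|²` cancel.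
-/

theorem wedge_swap (a b : ℝ × ℝ) : wedge b a = -wedge a b := by
  unfold wedge
  ring

theorem wn_add (L₁ L₂ : ℝ) (m n : ℤ × ℤ) : wn L₁ L₂ (m + n) = wn L₁ L₂ m + wn L₁ L₂ n := by
  simp only [wn, Prod.fst_add, Prod.snd_add, Int.cast_add, Prod.mk_add_mk]
  congr 1 <;> ring

theorem wedge_div_ksq_add_swap_eq_zero {a b : ℝ × ℝ} (hsum : a.1 + b.1 = 0)
    (hres : -a.1 / ksq a + -b.1 / ksq b = 0) :
    wedge a b / ksq a + wedge b a / ksq b = 0 := by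
  have hb : b.1 = -a.1 := by linarith
  have hfactor : a.1 * ((ksq b)⁻¹ - (ksq a)⁻¹) = 0 := by
    rw [hb] at hres
    linear_combination hres
  rw [wedge_swap a b]
  rcases mul_eq_zero.mp hfactor with ha | hinv
  · have hwedge : wedge a b = 0 := by simp only [wedge, ha, hb, neg_zero, zero_mul, mul_zero, sub_zero]
    simp only [hwedge, zero_div, neg_zero, add_zero]
  · rw [div_eq_mul_inv, div_eq_mul_inv, sub_eq_zero.mp hinv]
    ring

theorem statement9_general (L₁ L₂ : ℝ)
    (nj nk nl : ℤ × ℤ) (hjk : nj + nk = nl)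
    (hl1 : (wn L₁ L₂ nl).1 = 0)
    (hres : Om L₁ L₂ nj + Om L₁ L₂ nk = 0) :
    bco L₁ L₂ nj nk nl + bco L₁ L₂ nk nj nl = 0 := by
  have hsum : (wn L₁ L₂ nj).1 + (wn L₁ L₂ nk).1 = 0 := by
    rw [← hl1, ← hjk, wn_add, Prod.fst_add]
  rw [bco, bco, if_pos hjk, if_pos ((add_comm nk nj).trans hjk), mul_div_assoc, mul_div_assoc,
    ← mul_add, wedge_div_ksq_add_swap_eq_zero hsum hres, mul_zero]

/-- the resonant cancellation of the paper, §3.1.  For nonzero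
`j, k ∈ Z_L` with `j + k = l`, `l₁ = 0`, and `Ω_j + Ω_k = 0` (resonance),
one has `B_{jkl} + B_{kjl} = 0`. -/
theorem statement9 (L₁ L₂ : ℝ) (hL₁ : 0 < L₁) (hL₂ : 0 < L₂)
    (nj nk nl : ℤ × ℤ) (hj : nj ≠ 0) (hk : nk ≠ 0) (hjk : nj + nk = nl)
    (hl1 : (wn L₁ L₂ nl).1 = 0)
    (hres : Om L₁ L₂ nj + Om L₁ L₂ nk = 0) :
    bco L₁ L₂ nj nk nl + bco L₁ L₂ nk nj nl = 0 :=
  statement9_general L₁ L₂ nj nk nl hjk hl1 hres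

end
end

section
/- There exists a constant c > 0 depending only on M such that for every smooth M-periodic zero-mean function ω and every smooth M-periodic zero-mean f̃ with Fourier support in {k : k₁ ≠ 0}: |(I_Ω f̃, B(ω,ω))_{L²}| ≤ c·‖∇f̃‖_{L²}·‖∇ω‖_{L²}·‖Δω‖_{L²}, where B(ω,ω) := (∇⊥Δ⁻¹ω)·∇ω and I_Ω f̃ := i·∑_{k₁≠0} (|k|²/k₁)·f_k·e^{i k·x}. -/
noncomputable section

open scoped Real

/-!
On the support of `f̃` we have `|k₁| ≥ 2π/L₁`, so `|(I_Ω f̃)_l| ≤ (L₁/2π) |l|² |f_l|`. For `p + q = l`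
the interaction coefficient obeys `|l|² |p ∧ q| / |p|² ≤ |l| (|q| + |q|²/|p|)`, by `|p ∧ q| ≤ |p||q|`
and `|l| ≤ |p| + |q|`. Hence the trilinear form is dominated by two sums
`∑_l |l||f_l| ∑_p u_p v_{l-p}` with `(u, v) = (|ω|, |k||ω|)` and `(|ω|/|k|, |k|²|ω|)`. Young's
inequality `‖u ⋆ v‖₂ ≤ ‖u‖₁ ‖v‖₂` bounds each by `‖u‖₁ ‖∇f̃‖ ‖v‖₂`, and Cauchy–Schwarz against the
convergent lattice sum `∑_{k ≠ 0} |k|⁻⁴` gives `‖ω‖₁ ≲ ‖Δω‖` (this is where `ω` has zero mean) and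
`‖ω/|k|‖₁ ≲ ‖∇ω‖`.
-/

namespace BetaPlane

open Real

section SequenceSpaces

variable {ι G : Type*}

def l2norm (a : ι → ℝ) : ℝ := √(∑' i, a i ^ 2)

theorem l2norm_nonneg (a : ι → ℝ) : 0 ≤ l2norm a := sqrt_nonneg _

theorem le_l2norm {a : ι → ℝ} (ha2 : Summable fun i => a i ^ 2) (i : ι) :
    a i ≤ l2norm a :=
  le_sqrt_of_sq_le (ha2.le_tsum i fun j _ => sq_nonneg (a j))

theorem summable_mul_and_tsum_mul_le {a b : ι → ℝ} (ha : ∀ i, 0 ≤ a i) (hb : ∀ i, 0 ≤ b i)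
    (ha2 : Summable fun i => a i ^ 2) (hb2 : Summable fun i => b i ^ 2) :
    Summable (fun i => a i * b i) ∧ ∑' i, a i * b i ≤ l2norm a * l2norm b := by
  simpa [l2norm, sqrt_eq_rpow, rpow_two] using
    summable_and_inner_le_Lp_mul_Lq_tsum_of_nonneg HolderConjugate.two_two ha hb
      (by simpa [rpow_two] using ha2) (by simpa [rpow_two] using hb2)

variable [AddGroup G]

theorem summable_mul_comp_sub {u v : G → ℝ} (hu : ∀ p, 0 ≤ u p) (hv : ∀ k, 0 ≤ v k)
    (hu1 : Summable u) (hv2 : Summable fun k => v k ^ 2) (l : G) :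
    Summable fun p => u p * v (l - p) :=
  (hu1.mul_right (l2norm v)).of_nonneg_of_le (fun p => mul_nonneg (hu p) (hv _))
    fun p => mul_le_mul_of_nonneg_left (le_l2norm hv2 _) (hu p)

theorem summable_and_tsum_mul_tsum_conv_le {Φ u v : G → ℝ} (hΦ : ∀ l, 0 ≤ Φ l)
    (hu : ∀ p, 0 ≤ u p) (hv : ∀ k, 0 ≤ v k) (hΦ2 : Summable fun l => Φ l ^ 2)
    (hu1 : Summable u) (hv2 : Summable fun k => v k ^ 2) :
    Summable (fun l => Φ l * ∑' p, u p * v (l - p)) ∧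
      ∑' l, Φ l * ∑' p, u p * v (l - p) ≤ (∑' p, u p) * (l2norm Φ * l2norm v) := by
  have hshift : ∀ (p : G) (s : Finset G), ∑ l ∈ s, Φ l * v (l - p) ≤ l2norm Φ * l2norm v := by
    intro p s
    have hv2p : Summable fun l => v (l - p) ^ 2 :=
      hv2.comp_injective (Equiv.subRight p).injective
    obtain ⟨hsum, hle⟩ := summable_mul_and_tsum_mul_le hΦ (fun l => hv (l - p)) hΦ2 hv2p
    have hl2 : l2norm (fun l => v (l - p)) = l2norm v :=
      congrArg sqrt ((Equiv.subRight p).tsum_eq fun k => v k ^ 2)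
    exact (hsum.sum_le_tsum s fun l _ => mul_nonneg (hΦ l) (hv _)).trans (hl2 ▸ hle)
  have hbound : ∀ s : Finset G,
      ∑ l ∈ s, Φ l * ∑' p, u p * v (l - p) ≤ (∑' p, u p) * (l2norm Φ * l2norm v) := by
    intro s
    have hterm : ∀ p, 0 ≤ ∑ l ∈ s, Φ l * v (l - p) := fun p =>
      Finset.sum_nonneg fun l _ => mul_nonneg (hΦ l) (hv _)
    calc ∑ l ∈ s, Φ l * ∑' p, u p * v (l - p)
        = ∑' p, u p * ∑ l ∈ s, Φ l * v (l - p) := by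
          simp_rw [← tsum_mul_left, Finset.mul_sum]
          rw [← Summable.tsum_finsetSum fun l _ =>
            (summable_mul_comp_sub hu hv hu1 hv2 l).mul_left (Φ l)]
          exact tsum_congr fun p => Finset.sum_congr rfl fun l _ => by ring
      _ ≤ ∑' p, u p * (l2norm Φ * l2norm v) :=
          Summable.tsum_le_tsum (fun p => mul_le_mul_of_nonneg_left (hshift p s) (hu p))
            ((hu1.mul_right _).of_nonneg_of_le (fun p => mul_nonneg (hu p) (hterm p))
              fun p => mul_le_mul_of_nonneg_left (hshift p s) (hu p))
            (hu1.mul_right _)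
      _ = _ := tsum_mul_right
  have hsum := summable_of_sum_le (fun l => mul_nonneg (hΦ l)
    (tsum_nonneg fun p => mul_nonneg (hu p) (hv _))) hbound
  exact ⟨hsum, hsum.tsum_le_of_sum_le hbound⟩

end SequenceSpaces

theorem ksq_nonneg (k : ℝ × ℝ) : 0 ≤ ksq k := by unfold ksq; positivity

theorem abs_wedge_le (a b : ℝ × ℝ) : |wedge a b| ≤ √(ksq a) * √(ksq b) := by
  rw [← sqrt_mul (ksq_nonneg a)]
  exact abs_le_sqrt (by simp only [wedge, ksq]; nlinarith [sq_nonneg (a.1 * b.1 + a.2 * b.2)])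

theorem sqrt_ksq_add_le (a b : ℝ × ℝ) : √(ksq (a + b)) ≤ √(ksq a) + √(ksq b) := by
  have hdot : a.1 * b.1 + a.2 * b.2 ≤ √(ksq a) * √(ksq b) := by
    rw [← sqrt_mul (ksq_nonneg a)]
    exact le_sqrt_of_sq_le (by simp only [ksq]; nlinarith [sq_nonneg (a.1 * b.2 - a.2 * b.1)])
  rw [sqrt_le_iff]
  refine ⟨by positivity, ?_⟩
  have hexp : ksq (a + b) = ksq a + ksq b + 2 * (a.1 * b.1 + a.2 * b.2) := by
    simp only [ksq, Prod.fst_add, Prod.snd_add]; ring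
  nlinarith [sq_sqrt (ksq_nonneg a), sq_sqrt (ksq_nonneg b)]

/-- At `a = 0` both sides degenerate harmlessly, since `x / 0 = 0` and `0⁻¹ = 0`. -/
theorem ksq_add_mul_abs_wedge_div_le (a b : ℝ × ℝ) :
    ksq (a + b) * |wedge a b / ksq a| ≤ √(ksq (a + b)) * (√(ksq b) + (√(ksq a))⁻¹ * ksq b) := by
  rcases (ksq_nonneg a).eq_or_lt with ha | ha
  · rw [← ha, div_zero, abs_zero, mul_zero]
    exact mul_nonneg (sqrt_nonneg _) (add_nonneg (sqrt_nonneg _)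
      (mul_nonneg (inv_nonneg.mpr (sqrt_nonneg _)) (ksq_nonneg b)))
  set A := √(ksq a)
  set B := √(ksq b)
  set C := √(ksq (a + b))
  have hA : 0 < A := sqrt_pos.mpr ha
  have hAsq : ksq a = A ^ 2 := (sq_sqrt ha.le).symm
  calc ksq (a + b) * |wedge a b / ksq a|
      ≤ C ^ 2 * (A * B / A ^ 2) := by
        rw [sq_sqrt (ksq_nonneg (a + b)), abs_div, abs_of_pos ha, hAsq]
        exact mul_le_mul_of_nonneg_left (by gcongr; exact abs_wedge_le a b) (ksq_nonneg _)
    _ = C * (C * B / A) := by field_simp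
    _ ≤ C * ((A + B) * B / A) := by gcongr; exact sqrt_ksq_add_le a b
    _ = C * (B + A⁻¹ * B ^ 2) := by field_simp
    _ = _ := by rw [sq_sqrt (ksq_nonneg b)]

def kabs (L₁ L₂ : ℝ) (n : ℤ × ℤ) : ℝ := √(ksq (wn L₁ L₂ n))

theorem wn_add (L₁ L₂ : ℝ) (p q : ℤ × ℤ) : wn L₁ L₂ (p + q) = wn L₁ L₂ p + wn L₁ L₂ q := by
  simp only [wn, Prod.fst_add, Prod.snd_add, Int.cast_add, Prod.mk_add_mk]
  congr 1 <;> ring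

theorem wn_zero (L₁ L₂ : ℝ) : wn L₁ L₂ 0 = 0 := by simp [wn]

theorem bcoef_eq (L₁ L₂ : ℝ) (j k : ℤ × ℤ) :
    bcoef L₁ L₂ j k = wedge (wn L₁ L₂ j) (wn L₁ L₂ k) / ksq (wn L₁ L₂ j) := by
  unfold bcoef
  split_ifs with hj
  · simp [hj, wn_zero, ksq]
  · rfl

variable {L₁ L₂ : ℝ}

theorem poin_sq_mul_le_ksq_wn (hL₁ : 0 < L₁) (hL₂ : 0 < L₂) (p : ℤ × ℤ) :
    poin L₁ L₂ ^ 2 * ((p.1 : ℝ) ^ 2 + (p.2 : ℝ) ^ 2) ≤ ksq (wn L₁ L₂ p) := by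
  have h₁ : poin L₁ L₂ ^ 2 ≤ (2 * π / L₁) ^ 2 :=
    pow_le_pow_left₀ (le_min (by positivity) (by positivity)) (min_le_left _ _) 2
  have h₂ : poin L₁ L₂ ^ 2 ≤ (2 * π / L₂) ^ 2 :=
    pow_le_pow_left₀ (le_min (by positivity) (by positivity)) (min_le_right _ _) 2
  have hexp : ksq (wn L₁ L₂ p) =
      (2 * π / L₁) ^ 2 * (p.1 : ℝ) ^ 2 + (2 * π / L₂) ^ 2 * (p.2 : ℝ) ^ 2 := by
    simp only [ksq, wn]; ring
  rw [hexp]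
  nlinarith [sq_nonneg (p.1 : ℝ), sq_nonneg (p.2 : ℝ)]

theorem ksq_wn_ne_zero (hL₁ : 0 < L₁) (hL₂ : 0 < L₂) {p : ℤ × ℤ} (hp : p ≠ 0) :
    ksq (wn L₁ L₂ p) ≠ 0 := by
  have hm : 0 < poin L₁ L₂ := lt_min (by positivity) (by positivity)
  have hp' : 0 < (p.1 : ℝ) ^ 2 + (p.2 : ℝ) ^ 2 := by
    have : p.1 ≠ 0 ∨ p.2 ≠ 0 := by contrapose! hp; exact Prod.ext hp.1 hp.2
    rcases this with h | h
    · have : (p.1 : ℝ) ≠ 0 := by exact_mod_cast h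
      positivity
    · have : (p.2 : ℝ) ≠ 0 := by exact_mod_cast h
      positivity
  exact ((by positivity : 0 < poin L₁ L₂ ^ 2 * _).trans_le (poin_sq_mul_le_ksq_wn hL₁ hL₂ p)).ne'

/-- Compared with the lattice sum `∑ ‖x‖⁻⁴` over `ℤ²` (sup norm) from the theory of Eisenstein
series. -/
theorem summable_inv_ksq_wn_sq (hL₁ : 0 < L₁) (hL₂ : 0 < L₂) :
    Summable fun p : ℤ × ℤ => (ksq (wn L₁ L₂ p))⁻¹ ^ 2 := by
  set e := (finTwoArrowEquiv ℤ).symm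
  set m := poin L₁ L₂
  have hm : 0 < m := lt_min (by positivity) (by positivity)
  have hnorm : ∀ p : ℤ × ℤ, ‖e p‖ ^ 2 ≤ (p.1 : ℝ) ^ 2 + (p.2 : ℝ) ^ 2 := fun p => by
    have h : ‖e p‖ ≤ √((p.1 : ℝ) ^ 2 + (p.2 : ℝ) ^ 2) := by
      refine (pi_norm_le_iff_of_nonneg (sqrt_nonneg _)).mpr (Fin.forall_fin_two.mpr ⟨?_, ?_⟩) <;>
        simp only [e, finTwoArrowEquiv_symm_apply, Matrix.cons_val_zero, Matrix.cons_val_one,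
          Int.norm_eq_abs] <;>
        exact abs_le_sqrt (by nlinarith [sq_nonneg (p.1 : ℝ), sq_nonneg (p.2 : ℝ)])
    calc ‖e p‖ ^ 2 ≤ √((p.1 : ℝ) ^ 2 + (p.2 : ℝ) ^ 2) ^ 2 := by gcongr
      _ = _ := sq_sqrt (by positivity)
  refine (((EisensteinSeries.summable_one_div_norm_rpow (k := 4) (by norm_num)).comp_injective
    e.injective).mul_left (m ^ 4)⁻¹).of_nonneg_of_le (fun _ => sq_nonneg _) fun p => ?_
  rcases eq_or_ne p 0 with rfl | hp
  · simp only [ksq, wn_zero, Prod.fst_zero, Prod.snd_zero, ne_eq, OfNat.ofNat_ne_zero,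
      not_false_eq_true, zero_pow, add_zero, inv_zero, rpow_neg_ofNat, Int.reduceNeg, zpow_neg,
      zpow_ofNat, Function.comp_apply]
    positivity
  have he0 : e 0 = 0 := by ext i; fin_cases i <;> rfl
  have hep : 0 < ‖e p‖ := norm_pos_iff.mpr (e.injective.ne_iff' he0 |>.mpr hp)
  have hksq : m ^ 2 * ‖e p‖ ^ 2 ≤ ksq (wn L₁ L₂ p) :=
    (mul_le_mul_of_nonneg_left (hnorm p) (sq_nonneg m)).trans (poin_sq_mul_le_ksq_wn hL₁ hL₂ p)
  simp only [Function.comp_apply, rpow_neg (norm_nonneg _)]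
  rw [show (4 : ℝ) = ((4 : ℕ) : ℝ) by norm_num, rpow_natCast, ← mul_inv,
    show m ^ 4 * ‖e p‖ ^ 4 = (m ^ 2 * ‖e p‖ ^ 2) ^ 2 by ring, ← inv_pow]
  exact pow_le_pow_left₀ (inv_nonneg.mpr (ksq_nonneg _)) (inv_anti₀ (by positivity) hksq) 2

def invKsqL2 (L₁ L₂ : ℝ) : ℝ := l2norm fun p : ℤ × ℤ => (ksq (wn L₁ L₂ p))⁻¹

theorem invKsqL2_pos (hL₁ : 0 < L₁) (hL₂ : 0 < L₂) : 0 < invKsqL2 L₁ L₂ := by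
  refine sqrt_pos.mpr ((summable_inv_ksq_wn_sq hL₁ hL₂).tsum_pos (fun _ => sq_nonneg _) (1, 0) ?_)
  have h : ksq (wn L₁ L₂ (1, 0)) = (2 * π / L₁) ^ 2 := by simp [ksq, wn]
  rw [h]
  positivity

theorem summable_ksq_pow_mul_norm_sq {c : ℤ × ℤ → ℂ} (hc : regular L₁ L₂ c) (d : ℕ) :
    Summable fun n => ksq (wn L₁ L₂ n) ^ d * ‖c n‖ ^ 2 := by
  refine (hc d).of_nonneg_of_le (fun n => by have := ksq_nonneg (wn L₁ L₂ n); positivity)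
    fun n => ?_
  rw [rpow_natCast]
  gcongr
  · exact ksq_nonneg _
  · exact le_add_of_nonneg_left zero_le_one

theorem summable_kabs_mul_norm_sq {c : ℤ × ℤ → ℂ} (hc : regular L₁ L₂ c) :
    Summable fun n => (kabs L₁ L₂ n * ‖c n‖) ^ 2 :=
  (summable_ksq_pow_mul_norm_sq hc 1).congr fun n => by
    rw [mul_pow, kabs, sq_sqrt (ksq_nonneg _), pow_one]

theorem summable_ksq_mul_norm_sq {c : ℤ × ℤ → ℂ} (hc : regular L₁ L₂ c) :
    Summable fun n => (ksq (wn L₁ L₂ n) * ‖c n‖) ^ 2 :=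
  (summable_ksq_pow_mul_norm_sq hc 2).congr fun n => by rw [mul_pow]

theorem sqrt_hsq_one (hL : 0 ≤ L₁ * L₂) (c : ℤ × ℤ → ℂ) :
    √(hsq L₁ L₂ 1 c) = √(L₁ * L₂) * l2norm fun n => kabs L₁ L₂ n * ‖c n‖ := by
  rw [hsq, sqrt_mul hL, l2norm]
  simp only [rpow_one, mul_pow, kabs, sq_sqrt (ksq_nonneg _)]

theorem sqrt_hsq_two (hL : 0 ≤ L₁ * L₂) (c : ℤ × ℤ → ℂ) :
    √(hsq L₁ L₂ 2 c) = √(L₁ * L₂) * l2norm fun n => ksq (wn L₁ L₂ n) * ‖c n‖ := by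
  rw [hsq, sqrt_mul hL, l2norm]
  simp only [rpow_two, mul_pow]

theorem norm_ip_le (hL : 0 ≤ L₁ * L₂) {a b : ℤ × ℤ → ℂ}
    (hab : Summable fun n => ‖a n‖ * ‖b n‖) :
    ‖ip L₁ L₂ a b‖ ≤ L₁ * L₂ * ∑' n, ‖a n‖ * ‖b n‖ := by
  have hnorm : ∀ n, ‖a n * (starRingEnd ℂ) (b n)‖ = ‖a n‖ * ‖b n‖ := fun n => by
    rw [norm_mul, RCLike.norm_conj]
  rw [ip, norm_mul, Complex.norm_real, Real.norm_eq_abs, abs_of_nonneg hL]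
  gcongr
  exact tsum_of_norm_bounded hab.hasSum fun n => (hnorm n).le

theorem norm_iOm_le (hL₁ : 0 < L₁) (f : ℤ × ℤ → ℂ) (l : ℤ × ℤ) :
    ‖iOm L₁ L₂ f l‖ ≤ L₁ / (2 * π) * (ksq (wn L₁ L₂ l) * ‖f l‖) := by
  unfold iOm
  split_ifs with hl
  · rw [norm_zero]; exact mul_nonneg (by positivity) (mul_nonneg (ksq_nonneg _) (norm_nonneg _))
  have hk₁ : 2 * π / L₁ ≤ |(wn L₁ L₂ l).1| := by
    have h1 : (1 : ℝ) ≤ |(l.1 : ℝ)| := by exact_mod_cast Int.one_le_abs hl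
    simp only [wn, abs_div, abs_mul, abs_of_pos hL₁, abs_of_pos two_pi_pos]
    exact div_le_div_of_nonneg_right (le_mul_of_one_le_right two_pi_pos.le h1) hL₁.le
  rw [norm_mul, norm_mul, Complex.norm_I, one_mul, Complex.norm_real, norm_div, Real.norm_eq_abs,
    Real.norm_eq_abs, abs_of_nonneg (ksq_nonneg _), ← mul_assoc]
  gcongr
  calc ksq (wn L₁ L₂ l) / |(wn L₁ L₂ l).1| ≤ ksq (wn L₁ L₂ l) / (2 * π / L₁) := by
        gcongr; exact ksq_nonneg _
    _ = _ := by field_simp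

theorem norm_iOm_mul_abs_bcoef_le (hL₁ : 0 < L₁) (f : ℤ × ℤ → ℂ) (l p : ℤ × ℤ) :
    ‖iOm L₁ L₂ f l‖ * |bcoef L₁ L₂ p (l - p)| ≤
      L₁ / (2 * π) * (kabs L₁ L₂ l * ‖f l‖) *
        (kabs L₁ L₂ (l - p) + (kabs L₁ L₂ p)⁻¹ * ksq (wn L₁ L₂ (l - p))) := by
  have hsymb := ksq_add_mul_abs_wedge_div_le (wn L₁ L₂ p) (wn L₁ L₂ (l - p))
  rw [← wn_add, add_sub_cancel, ← bcoef_eq] at hsymb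
  calc ‖iOm L₁ L₂ f l‖ * |bcoef L₁ L₂ p (l - p)|
      ≤ L₁ / (2 * π) * (ksq (wn L₁ L₂ l) * ‖f l‖) * |bcoef L₁ L₂ p (l - p)| := by
        gcongr; exact norm_iOm_le hL₁ f l
    _ = L₁ / (2 * π) * ‖f l‖ * (ksq (wn L₁ L₂ l) * |bcoef L₁ L₂ p (l - p)|) := by ring
    _ ≤ L₁ / (2 * π) * ‖f l‖ * (kabs L₁ L₂ l *
          (kabs L₁ L₂ (l - p) + (kabs L₁ L₂ p)⁻¹ * ksq (wn L₁ L₂ (l - p)))) :=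
        mul_le_mul_of_nonneg_left hsymb (by positivity)
    _ = _ := by ring

theorem norm_iOm_mul_norm_bconv_le (hL₁ : 0 < L₁) (f ω : ℤ × ℤ → ℂ) (l : ℤ × ℤ)
    (h₁ : Summable fun p => ‖ω p‖ * (kabs L₁ L₂ (l - p) * ‖ω (l - p)‖))
    (h₂ : Summable fun p =>
      (kabs L₁ L₂ p)⁻¹ * ‖ω p‖ * (ksq (wn L₁ L₂ (l - p)) * ‖ω (l - p)‖)) :
    ‖iOm L₁ L₂ f l‖ * ‖bconv L₁ L₂ ω ω l‖ ≤
      L₁ / (2 * π) * (kabs L₁ L₂ l * ‖f l‖) *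
        (∑' p, ‖ω p‖ * (kabs L₁ L₂ (l - p) * ‖ω (l - p)‖) +
          ∑' p, (kabs L₁ L₂ p)⁻¹ * ‖ω p‖ * (ksq (wn L₁ L₂ (l - p)) * ‖ω (l - p)‖)) := by
  rw [← norm_mul, bconv, ← tsum_mul_left, ← h₁.tsum_add h₂, ← tsum_mul_left]
  refine tsum_of_norm_bounded ((h₁.add h₂).mul_left _).hasSum fun p => ?_
  rw [norm_mul, norm_mul, norm_mul, Complex.norm_real, Real.norm_eq_abs]
  calc ‖iOm L₁ L₂ f l‖ * (|bcoef L₁ L₂ p (l - p)| * ‖ω p‖ * ‖ω (l - p)‖)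
      = ‖iOm L₁ L₂ f l‖ * |bcoef L₁ L₂ p (l - p)| * (‖ω p‖ * ‖ω (l - p)‖) := by ring
    _ ≤ L₁ / (2 * π) * (kabs L₁ L₂ l * ‖f l‖) *
          (kabs L₁ L₂ (l - p) + (kabs L₁ L₂ p)⁻¹ * ksq (wn L₁ L₂ (l - p))) *
          (‖ω p‖ * ‖ω (l - p)‖) :=
        mul_le_mul_of_nonneg_right (norm_iOm_mul_abs_bcoef_le hL₁ f l p) (by positivity)
    _ = _ := by ring

theorem summable_and_tsum_norm_le (hL₁ : 0 < L₁) (hL₂ : 0 < L₂) {ω : ℤ × ℤ → ℂ}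
    (hω0 : ω 0 = 0) (hω : regular L₁ L₂ ω) :
    Summable (fun p => ‖ω p‖) ∧
      ∑' p, ‖ω p‖ ≤ invKsqL2 L₁ L₂ *
        l2norm fun p => ksq (wn L₁ L₂ p) * ‖ω p‖ := by
  have heq : ∀ p, (ksq (wn L₁ L₂ p))⁻¹ * (ksq (wn L₁ L₂ p) * ‖ω p‖) = ‖ω p‖ := fun p => by
    rcases eq_or_ne p 0 with rfl | hp
    · simp [hω0]
    · rw [inv_mul_cancel_left₀ (ksq_wn_ne_zero hL₁ hL₂ hp)]
  simpa only [heq, invKsqL2] using summable_mul_and_tsum_mul_le (fun p => inv_nonneg.mpr (ksq_nonneg _))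
    (fun p => mul_nonneg (ksq_nonneg _) (norm_nonneg _)) (summable_inv_ksq_wn_sq hL₁ hL₂)
    (summable_ksq_mul_norm_sq hω)

theorem summable_and_tsum_inv_kabs_mul_norm_le (hL₁ : 0 < L₁) (hL₂ : 0 < L₂)
    {ω : ℤ × ℤ → ℂ} (hω : regular L₁ L₂ ω) :
    Summable (fun p => (kabs L₁ L₂ p)⁻¹ * ‖ω p‖) ∧
      ∑' p, (kabs L₁ L₂ p)⁻¹ * ‖ω p‖ ≤ invKsqL2 L₁ L₂ *
        l2norm fun p => kabs L₁ L₂ p * ‖ω p‖ := by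
  have heq : ∀ p, (ksq (wn L₁ L₂ p))⁻¹ * (kabs L₁ L₂ p * ‖ω p‖) = (kabs L₁ L₂ p)⁻¹ * ‖ω p‖ :=
    fun p => by
      rw [← mul_self_sqrt (ksq_nonneg (wn L₁ L₂ p)), ← kabs, ← mul_assoc, ← div_eq_inv_mul,
        div_self_mul_self']
  simpa only [heq, invKsqL2] using summable_mul_and_tsum_mul_le (b := fun p => kabs L₁ L₂ p * ‖ω p‖)
    (fun p => inv_nonneg.mpr (ksq_nonneg _)) (fun p => mul_nonneg (sqrt_nonneg _) (norm_nonneg _))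
    (summable_inv_ksq_wn_sq hL₁ hL₂) (summable_kabs_mul_norm_sq hω)

theorem summable_and_tsum_norm_iOm_mul_norm_bconv_le (hL₁ : 0 < L₁) (hL₂ : 0 < L₂)
    {ω f : ℤ × ℤ → ℂ} (hω0 : ω 0 = 0) (hω : regular L₁ L₂ ω) (hf : regular L₁ L₂ f) :
    Summable (fun l => ‖iOm L₁ L₂ f l‖ * ‖bconv L₁ L₂ ω ω l‖) ∧
      ∑' l, ‖iOm L₁ L₂ f l‖ * ‖bconv L₁ L₂ ω ω l‖ ≤
        L₁ / (2 * π) * (2 * invKsqL2 L₁ L₂ *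
          ((l2norm fun l => kabs L₁ L₂ l * ‖f l‖) * (l2norm fun k => kabs L₁ L₂ k * ‖ω k‖) *
            l2norm fun k => ksq (wn L₁ L₂ k) * ‖ω k‖)) := by
  set C := L₁ / (2 * π)
  set Φ := fun l => kabs L₁ L₂ l * ‖f l‖
  set G := fun k => kabs L₁ L₂ k * ‖ω k‖
  set D := fun k => ksq (wn L₁ L₂ k) * ‖ω k‖
  set U := fun p => (kabs L₁ L₂ p)⁻¹ * ‖ω p‖
  have hΦ : ∀ l, 0 ≤ Φ l := fun l => mul_nonneg (sqrt_nonneg _) (norm_nonneg _)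
  have hG : ∀ k, 0 ≤ G k := fun k => mul_nonneg (sqrt_nonneg _) (norm_nonneg _)
  have hD : ∀ k, 0 ≤ D k := fun k => mul_nonneg (ksq_nonneg _) (norm_nonneg _)
  have hU : ∀ p, 0 ≤ U p := fun p => mul_nonneg (inv_nonneg.mpr (sqrt_nonneg _)) (norm_nonneg _)
  obtain ⟨hω1, hω1_le⟩ := summable_and_tsum_norm_le hL₁ hL₂ hω0 hω
  obtain ⟨hU1, hU1_le⟩ := summable_and_tsum_inv_kabs_mul_norm_le hL₁ hL₂ hω
  obtain ⟨hY₁, hY₁_le⟩ := summable_and_tsum_mul_tsum_conv_le hΦ (fun p => norm_nonneg (ω p)) hG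
    (summable_kabs_mul_norm_sq hf) hω1 (summable_kabs_mul_norm_sq hω)
  obtain ⟨hY₂, hY₂_le⟩ := summable_and_tsum_mul_tsum_conv_le hΦ hU hD
    (summable_kabs_mul_norm_sq hf) hU1 (summable_ksq_mul_norm_sq hω)
  have hpt : ∀ l, ‖iOm L₁ L₂ f l‖ * ‖bconv L₁ L₂ ω ω l‖ ≤
      C * Φ l * (∑' p, ‖ω p‖ * G (l - p) + ∑' p, U p * D (l - p)) := fun l =>
    norm_iOm_mul_norm_bconv_le hL₁ f ω l
      (summable_mul_comp_sub (fun p => norm_nonneg (ω p)) hG hω1 (summable_kabs_mul_norm_sq hω) l)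
      (summable_mul_comp_sub hU hD hU1 (summable_ksq_mul_norm_sq hω) l)
  have hsum : Summable fun l => C * Φ l * (∑' p, ‖ω p‖ * G (l - p) + ∑' p, U p * D (l - p)) :=
    ((hY₁.add hY₂).mul_left C).congr fun l => by ring
  have hLHS := hsum.of_nonneg_of_le (fun l => by positivity) hpt
  refine ⟨hLHS, ?_⟩
  calc ∑' l, ‖iOm L₁ L₂ f l‖ * ‖bconv L₁ L₂ ω ω l‖
      ≤ ∑' l, C * Φ l * (∑' p, ‖ω p‖ * G (l - p) + ∑' p, U p * D (l - p)) :=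
        Summable.tsum_le_tsum hpt hLHS hsum
    _ = C * (∑' l, Φ l * ∑' p, ‖ω p‖ * G (l - p) + ∑' l, Φ l * ∑' p, U p * D (l - p)) := by
        rw [← hY₁.tsum_add hY₂, ← tsum_mul_left]
        exact tsum_congr fun l => by ring
    _ ≤ C * (invKsqL2 L₁ L₂ * l2norm D * (l2norm Φ * l2norm G) +
          invKsqL2 L₁ L₂ * l2norm G * (l2norm Φ * l2norm D)) := by
        gcongr
        · exact hY₁_le.trans (mul_le_mul_of_nonneg_right hω1_le
            (mul_nonneg (l2norm_nonneg _) (l2norm_nonneg _)))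
        · exact hY₂_le.trans (mul_le_mul_of_nonneg_right hU1_le
            (mul_nonneg (l2norm_nonneg _) (l2norm_nonneg _)))
    _ = _ := by ring

end BetaPlane

/-- estimate (3.21) of the paper.  There is `c > 0` depending only on
`M` such that for every smooth zero-mean real field `ω` and every smooth zero-mean real
`f̃` with Fourier support in `{k₁ ≠ 0}`:
`|(I_Ω f̃, B(ω,ω))_{L²}| ≤ c ‖∇f̃‖ ‖∇ω‖ ‖Δω‖`. -/
theorem statement12 (L₁ L₂ : ℝ) (hL₁ : 0 < L₁) (hL₂ : 0 < L₂) :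
    ∃ c : ℝ, 0 < c ∧
      ∀ ω f : ℤ × ℤ → ℂ,
        ω 0 = 0 → realField ω → regular L₁ L₂ ω →
        realField f → regular L₁ L₂ f → (∀ n : ℤ × ℤ, n.1 = 0 → f n = 0) →
        ‖ip L₁ L₂ (iOm L₁ L₂ f) (bconv L₁ L₂ ω ω)‖
          ≤ c * Real.sqrt (hsq L₁ L₂ 1 f) * Real.sqrt (hsq L₁ L₂ 1 ω) *
              Real.sqrt (hsq L₁ L₂ 2 ω) := by
  have hM : 0 < L₁ * L₂ := mul_pos hL₁ hL₂
  have hK := BetaPlane.invKsqL2_pos hL₁ hL₂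
  refine ⟨L₁ / (2 * π) * (2 * BetaPlane.invKsqL2 L₁ L₂) / Real.sqrt (L₁ * L₂), by positivity, ?_⟩
  intro ω f hω0 _ hω _ hf _
  obtain ⟨hsum, hle⟩ := BetaPlane.summable_and_tsum_norm_iOm_mul_norm_bconv_le hL₁ hL₂ hω0 hω hf
  calc ‖ip L₁ L₂ (iOm L₁ L₂ f) (bconv L₁ L₂ ω ω)‖
      ≤ L₁ * L₂ * ∑' l, ‖iOm L₁ L₂ f l‖ * ‖bconv L₁ L₂ ω ω l‖ := BetaPlane.norm_ip_le hM.le hsum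
    _ ≤ L₁ * L₂ * (L₁ / (2 * π) * (2 * BetaPlane.invKsqL2 L₁ L₂ *
          ((BetaPlane.l2norm fun l => BetaPlane.kabs L₁ L₂ l * ‖f l‖) *
            (BetaPlane.l2norm fun k => BetaPlane.kabs L₁ L₂ k * ‖ω k‖) *
            BetaPlane.l2norm fun k => ksq (wn L₁ L₂ k) * ‖ω k‖))) := by gcongr
    _ = _ := by
        rw [BetaPlane.sqrt_hsq_one hM.le, BetaPlane.sqrt_hsq_one hM.le,
          BetaPlane.sqrt_hsq_two hM.le]
        field_simp
        rw [Real.sq_sqrt hM.le]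
        ring

end
end

section
/- There exists a constant c > 0 depending only on M such that for every t ∈ ℝ, every ε > 0, every smooth M-periodic zero-mean ω̃ with Fourier support in {k : k₁ ≠ 0} and every smooth zero-mean zonal function ω̄ (depending on y only): |(B_Ω(ω̃,ω̃), ω̄)| ≤ c·‖ω̃‖_{L²}·‖∇ω̃‖_{L²}·‖ω̄‖_{L²}^{1/2}·‖∂_yω̄‖_{L²}^{1/2}, where (B_Ω(ω̃,ω̃), ω̄) := (|M|/(2i))·∑' l₂·ω̃_j·ω̃_k·conj(ω̄_l)·e^{−i(Ω_j+Ω_k)t/ε}, the sum ∑' being over all j, k ∈ Z_L with j₁ ≠ 0, k₁ ≠ 0, l := j + k having l₁ = 0, and Ω_j + Ω_k ≠ 0. -/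
/-!
Every term has modulus `|l₂| |ω̃_j| |ω̃_k| |ω̄_l|`, so the phases and the resonance condition can
be dropped. Since `|l₂| ≤ |j₂| + |k₂|`, Young's inequality
`∑_{j,k} g_j h_k β_{j+k} ≤ ‖g‖_{ℓ²} ‖h‖_{ℓ²} ‖β‖_{ℓ¹}` bounds the sum by
`2 ‖∂_y ω̃‖ ‖ω̃‖ ∑_l |ω̄_l|`. As `ω̄` depends on `y` alone, the one-dimensional Agmon inequality
`∑_{m ≠ 0} |c_m| ≤ 3 (∑ |c_m|²)^{1/4} (∑ m² |c_m|²)^{1/4}` (Cauchy–Schwarz with the weight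
`r² + m²`, together with `∑_{m ≠ 0} 1 / (r² + m²) ≤ 4 / r`) turns `∑_l |ω̄_l|` into
`‖ω̄‖^{1/2} ‖∂_y ω̄‖^{1/2}`.
-/

noncomputable section

open scoped Real

open Finset

theorem sum_range_one_div_sq_add_sq_le {r : ℝ} (hr : 0 < r) (N : ℕ) :
    ∑ n ∈ range N, 1 / (r ^ 2 + ((n : ℝ) + 1) ^ 2) ≤ 2 / r := by
  suffices h : ∑ n ∈ range N, 1 / (r ^ 2 + ((n : ℝ) + 1) ^ 2) ≤ 2 / r - 2 / (r + N) by
    have : 0 < r + N := by positivity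
    linarith [div_pos two_pos this]
  induction N with
  | zero => simp
  | succ N ih =>
    rw [sum_range_succ]
    have step : 1 / (r ^ 2 + ((N : ℝ) + 1) ^ 2) ≤ 2 / (r + N) - 2 / (r + (N + 1 : ℕ)) := by
      push_cast
      rw [div_sub_div _ _ (by positivity) (by positivity), div_le_div_iff₀ (by positivity)
        (by positivity)]
      nlinarith [sq_nonneg (r - N - 1)]
    linarith

theorem sum_one_div_sq_add_sq_le_of_zero_notMem {r : ℝ} (hr : 0 < r) {s : Finset ℤ}
    (hs : 0 ∉ s) : ∑ m ∈ s, 1 / (r ^ 2 + (m : ℝ) ^ 2) ≤ 4 / r := by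
  set f : ℤ → ℝ := fun m => 1 / (r ^ 2 + (m : ℝ) ^ 2)
  set N := s.sup Int.natAbs
  set P := (range N).image fun n : ℕ => ((n : ℤ) + 1)
  set Q := (range N).image fun n : ℕ => -((n : ℤ) + 1)
  have hsPQ : s ⊆ P ∪ Q := by
    intro m hm
    have hmN : m.natAbs ≤ N := le_sup (f := Int.natAbs) hm
    have hm0 : m ≠ 0 := fun h => hs (h ▸ hm)
    simp only [P, Q, mem_union, mem_image, mem_range]
    rcases lt_or_gt_of_ne hm0 with h | h
    · exact Or.inr ⟨m.natAbs - 1, by omega, by omega⟩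
    · exact Or.inl ⟨m.natAbs - 1, by omega, by omega⟩
  have hP : ∑ m ∈ P, f m ≤ 2 / r := by
    rw [sum_image fun _ _ _ _ h => by simpa using h]
    simpa [f] using sum_range_one_div_sq_add_sq_le hr N
  have hQ : ∑ m ∈ Q, f m ≤ 2 / r := by
    rw [sum_image fun _ _ _ _ h => by simpa using h]
    simpa only [f, Int.cast_neg, neg_sq, Int.cast_add, Int.cast_natCast, Int.cast_one] using
      sum_range_one_div_sq_add_sq_le hr N
  have hf : ∀ m, 0 ≤ f m := fun m => by positivity
  calc ∑ m ∈ s, f m ≤ ∑ m ∈ P ∪ Q, f m := sum_le_sum_of_subset_of_nonneg hsPQ fun m _ _ => hf m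
    _ ≤ ∑ m ∈ P, f m + ∑ m ∈ Q, f m := by
      rw [← sum_union_inter]; exact le_add_of_nonneg_right (sum_nonneg fun m _ => hf m)
    _ ≤ 2 / r + 2 / r := add_le_add hP hQ
    _ = 4 / r := by ring

theorem sq_sum_le_of_zero_notMem {r : ℝ} (hr : 0 < r) {s : Finset ℤ} (hs : 0 ∉ s)
    (c : ℤ → ℝ) :
    (∑ m ∈ s, c m) ^ 2 ≤ 4 / r * (r ^ 2 * ∑ m ∈ s, c m ^ 2 + ∑ m ∈ s, (m : ℝ) ^ 2 * c m ^ 2) := by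
  have hw : ∀ m : ℤ, 0 < r ^ 2 + (m : ℝ) ^ 2 := fun m => by positivity
  calc (∑ m ∈ s, c m) ^ 2
      ≤ (∑ m ∈ s, 1 / (r ^ 2 + (m : ℝ) ^ 2)) * ∑ m ∈ s, (r ^ 2 + (m : ℝ) ^ 2) * c m ^ 2 :=
        sum_sq_le_sum_mul_sum_of_sq_le_mul s (fun m _ => (one_div_pos.2 (hw m)).le)
          (fun m _ => by positivity) (fun m _ => by field_simp [(hw m).ne']; rfl)
    _ ≤ 4 / r * ∑ m ∈ s, (r ^ 2 + (m : ℝ) ^ 2) * c m ^ 2 :=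
        mul_le_mul_of_nonneg_right (sum_one_div_sq_add_sq_le_of_zero_notMem hr hs)
          (sum_nonneg fun m _ => by positivity)
    _ = 4 / r * (r ^ 2 * ∑ m ∈ s, c m ^ 2 + ∑ m ∈ s, (m : ℝ) ^ 2 * c m ^ 2) := by
        simp only [add_mul, sum_add_distrib, mul_sum]

theorem Int.summable_and_tsum_le_agmon {c : ℤ → ℝ} (hc : ∀ m, 0 ≤ c m) (hc0 : c 0 = 0)
    (hc2 : Summable fun m => c m ^ 2) (hmc2 : Summable fun m : ℤ => (m : ℝ) ^ 2 * c m ^ 2) :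
    Summable c ∧ ∑' m, c m ≤ 3 * √√((∑' m, c m ^ 2) * ∑' m : ℤ, (m : ℝ) ^ 2 * c m ^ 2) := by
  set X := ∑' m, c m ^ 2
  set Y := ∑' m : ℤ, (m : ℝ) ^ 2 * c m ^ 2
  suffices h : ∀ s : Finset ℤ, ∑ m ∈ s, c m ≤ 3 * √√(X * Y) from
    ⟨summable_of_sum_le hc h, tsum_le_of_sum_le' (by positivity) h⟩
  intro s
  rw [← sum_erase s hc0]
  have hX0 : 0 ≤ X := tsum_nonneg fun m => sq_nonneg (c m)
  rcases hX0.eq_or_lt with hX | hX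
  · have hc_zero : ∀ m, c m = 0 := fun m =>
      pow_eq_zero_iff two_ne_zero |>.mp <|
        le_antisymm (hX ▸ hc2.le_tsum m fun _ _ => sq_nonneg _) (sq_nonneg _)
    simp only [hc_zero, sum_const_zero]
    positivity
  have hXY : X ≤ Y := hc2.tsum_le_tsum (fun m => by
    rcases eq_or_ne m 0 with rfl | hm
    · simp [hc0]
    · have : (1 : ℤ) ≤ m ^ 2 := by nlinarith [Int.one_le_abs hm, sq_abs m]
      have : (1 : ℝ) ≤ (m : ℝ) ^ 2 := by exact_mod_cast this
      nlinarith [sq_nonneg (c m)]) hmc2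
  have hY : 0 < Y := hX.trans_le hXY
  -- `r = √Y / √X` balances `r² X` against `Y`
  have hr : 0 < √Y / √X := by positivity
  have hrX : (√Y / √X) ^ 2 * X = Y := by
    rw [div_pow, Real.sq_sqrt hY.le, Real.sq_sqrt hX.le]; field_simp
  have hYr : Y / (√Y / √X) = √(X * Y) := by
    rw [Real.sqrt_mul hX.le, div_div_eq_mul_div, div_eq_iff (by positivity)]
    linear_combination (-√X) * Real.mul_self_sqrt hY.le
  have hsq : (∑ m ∈ s.erase 0, c m) ^ 2 ≤ 8 * √(X * Y) := calc
    _ ≤ 4 / (√Y / √X) * ((√Y / √X) ^ 2 * ∑ m ∈ s.erase 0, c m ^ 2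
          + ∑ m ∈ s.erase 0, (m : ℝ) ^ 2 * c m ^ 2) :=
        sq_sum_le_of_zero_notMem hr (notMem_erase 0 s) c
    _ ≤ 4 / (√Y / √X) * ((√Y / √X) ^ 2 * X + Y) := by
        gcongr
        · exact hc2.sum_le_tsum _ fun m _ => sq_nonneg _
        · exact hmc2.sum_le_tsum _ fun m _ => by positivity
    _ = 8 * √(X * Y) := by rw [hrX, ← hYr]; ring
  calc ∑ m ∈ s.erase 0, c m ≤ √(8 * √(X * Y)) := Real.le_sqrt_of_sq_le hsq
    _ = √8 * √√(X * Y) := Real.sqrt_mul (by norm_num) _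
    _ ≤ 3 * √√(X * Y) := by
        gcongr
        exact Real.sqrt_le_iff.mpr ⟨by norm_num, by norm_num⟩

theorem sum_comp_le_tsum_of_injOn {α β : Type*} {f : β → ℝ} (hf0 : ∀ y, 0 ≤ f y)
    (hf : Summable f) {i : α → β} {u : Finset α} (hi : Set.InjOn i u) :
    ∑ x ∈ u, f (i x) ≤ ∑' y, f y := by
  classical
  rw [← sum_image hi]
  exact hf.sum_le_tsum _ fun y _ => hf0 y

section Young

variable {G : Type*} [AddGroup G] {g h β : G → ℝ}

theorem sum_mul_mul_apply_add_le (hβ : ∀ n, 0 ≤ β n) (hg2 : Summable fun n => g n ^ 2)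
    (hh2 : Summable fun n => h n ^ 2) (hβ1 : Summable β) (s : Finset (G × G)) :
    ∑ p ∈ s, g p.1 * h p.2 * β (p.1 + p.2)
      ≤ √(∑' n, g n ^ 2) * √(∑' n, h n ^ 2) * ∑' n, β n := by
  classical
  have hfiber : ∀ l, ∑ p ∈ s with p.1 + p.2 = l, g p.1 * h p.2
      ≤ √(∑' n, g n ^ 2) * √(∑' n, h n ^ 2) := by
    intro l
    have hinj₁ : Set.InjOn (Prod.fst : G × G → G) ({p ∈ s | p.1 + p.2 = l} : Finset (G × G)) :=
        fun p hp q hq hpq => by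
      simp only [mem_coe, mem_filter] at hp hq
      exact Prod.ext hpq (add_left_cancel (hpq ▸ hp.2.trans hq.2.symm))
    have hinj₂ : Set.InjOn (Prod.snd : G × G → G) ({p ∈ s | p.1 + p.2 = l} : Finset (G × G)) :=
        fun p hp q hq hpq => by
      simp only [mem_coe, mem_filter] at hp hq
      exact Prod.ext (add_right_cancel (hpq ▸ hp.2.trans hq.2.symm)) hpq
    calc _ ≤ √(∑ p ∈ s with p.1 + p.2 = l, g p.1 ^ 2) *
            √(∑ p ∈ s with p.1 + p.2 = l, h p.2 ^ 2) :=
          Real.sum_mul_le_sqrt_mul_sqrt _ _ _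
      _ ≤ _ := by
          gcongr
          · exact sum_comp_le_tsum_of_injOn (fun n => sq_nonneg (g n)) hg2 hinj₁
          · exact sum_comp_le_tsum_of_injOn (fun n => sq_nonneg (h n)) hh2 hinj₂
  calc ∑ p ∈ s, g p.1 * h p.2 * β (p.1 + p.2)
      = ∑ l ∈ s.image (fun p => p.1 + p.2),
          (∑ p ∈ s with p.1 + p.2 = l, g p.1 * h p.2) * β l := by
        rw [← sum_fiberwise_of_maps_to fun p hp =>
          mem_image_of_mem (fun p : G × G => p.1 + p.2) hp]
        refine sum_congr rfl fun l _ => ?_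
        rw [sum_mul]
        exact sum_congr rfl fun p hp => by rw [(mem_filter.1 hp).2]
    _ ≤ ∑ l ∈ s.image (fun p => p.1 + p.2), √(∑' n, g n ^ 2) * √(∑' n, h n ^ 2) * β l :=
        sum_le_sum fun l _ => mul_le_mul_of_nonneg_right (hfiber l) (hβ l)
    _ ≤ √(∑' n, g n ^ 2) * √(∑' n, h n ^ 2) * ∑' n, β n := by
        rw [← mul_sum]
        gcongr
        exact hβ1.sum_le_tsum _ fun n _ => hβ n

theorem summable_and_tsum_mul_mul_apply_add_le (hg : ∀ n, 0 ≤ g n) (hh : ∀ n, 0 ≤ h n)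
    (hβ : ∀ n, 0 ≤ β n) (hg2 : Summable fun n => g n ^ 2) (hh2 : Summable fun n => h n ^ 2)
    (hβ1 : Summable β) :
    Summable (fun p : G × G => g p.1 * h p.2 * β (p.1 + p.2)) ∧
      ∑' p : G × G, g p.1 * h p.2 * β (p.1 + p.2)
        ≤ √(∑' n, g n ^ 2) * √(∑' n, h n ^ 2) * ∑' n, β n :=
  have hs := sum_mul_mul_apply_add_le hβ hg2 hh2 hβ1
  ⟨summable_of_sum_le (fun p => mul_nonneg (mul_nonneg (hg _) (hh _)) (hβ _)) hs,
    tsum_le_of_sum_le' (by have : 0 ≤ ∑' n, β n := tsum_nonneg hβ; positivity) hs⟩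

theorem summable_and_tsum_abs_mul_mul_apply_add_le {w : G → ℝ}
    (hw : ∀ j k, |w (j + k)| ≤ |w j| + |w k|) (hg : ∀ n, 0 ≤ g n) (hβ : ∀ n, 0 ≤ β n)
    (hg2 : Summable fun n => g n ^ 2) (hwg2 : Summable fun n => (w n * g n) ^ 2)
    (hβ1 : Summable β) :
    Summable (fun p : G × G => |w (p.1 + p.2)| * g p.1 * g p.2 * β (p.1 + p.2)) ∧
      ∑' p : G × G, |w (p.1 + p.2)| * g p.1 * g p.2 * β (p.1 + p.2)
        ≤ 2 * √(∑' n, (w n * g n) ^ 2) * √(∑' n, g n ^ 2) * ∑' n, β n := by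
  have hsq : ∀ n, (|w n| * g n) ^ 2 = (w n * g n) ^ 2 := fun n => by rw [mul_pow, sq_abs, mul_pow]
  have hwg2' : Summable fun n => (|w n| * g n) ^ 2 := by simpa only [hsq] using hwg2
  have hwg : ∀ n, 0 ≤ |w n| * g n := fun n => mul_nonneg (abs_nonneg _) (hg n)
  obtain ⟨hs₁, hb₁⟩ := summable_and_tsum_mul_mul_apply_add_le hwg hg hβ hwg2' hg2 hβ1
  obtain ⟨hs₂, hb₂⟩ := summable_and_tsum_mul_mul_apply_add_le hg hwg hβ hg2 hwg2' hβ1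
  simp only [hsq] at hb₁ hb₂
  have hle : ∀ p : G × G, |w (p.1 + p.2)| * g p.1 * g p.2 * β (p.1 + p.2)
      ≤ |w p.1| * g p.1 * g p.2 * β (p.1 + p.2) + g p.1 * (|w p.2| * g p.2) * β (p.1 + p.2) :=
    fun p => by
      have := mul_nonneg (mul_nonneg (hg p.1) (hg p.2)) (hβ (p.1 + p.2))
      nlinarith [hw p.1 p.2]
  have hnn : ∀ p : G × G, 0 ≤ |w (p.1 + p.2)| * g p.1 * g p.2 * β (p.1 + p.2) := fun p =>
    mul_nonneg (mul_nonneg (mul_nonneg (abs_nonneg _) (hg _)) (hg _)) (hβ _)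
  have hs := Summable.of_nonneg_of_le hnn hle (hs₁.add hs₂)
  refine ⟨hs, (hs.tsum_le_tsum hle (hs₁.add hs₂)).trans ?_⟩
  rw [hs₁.tsum_add hs₂]
  linarith

end Young

section Torus

variable {L₁ L₂ : ℝ}

theorem snd_sq_le_ksq (k : ℝ × ℝ) : k.2 ^ 2 ≤ ksq k :=
  le_add_of_nonneg_left (sq_nonneg _)

theorem wn_add_snd (j k : ℤ × ℤ) :
    (wn L₁ L₂ (j + k)).2 = (wn L₁ L₂ j).2 + (wn L₁ L₂ k).2 := by
  simp only [wn, Prod.snd_add, Int.cast_add]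
  ring

theorem hsq_zero (c : ℤ × ℤ → ℂ) : hsq L₁ L₂ 0 c = L₁ * L₂ * ∑' n, ‖c n‖ ^ 2 := by
  simp [hsq]

theorem hsq_one (c : ℤ × ℤ → ℂ) :
    hsq L₁ L₂ 1 c = L₁ * L₂ * ∑' n, ksq (wn L₁ L₂ n) * ‖c n‖ ^ 2 := by
  simp [hsq]

theorem hsq_zero_dy (c : ℤ × ℤ → ℂ) :
    hsq L₁ L₂ 0 (dy L₁ L₂ c) = L₁ * L₂ * ∑' n, ((wn L₁ L₂ n).2 * ‖c n‖) ^ 2 := by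
  simp [hsq, dy, mul_pow]

namespace regular

variable {c : ℤ × ℤ → ℂ}

theorem summable_sq (hc : regular L₁ L₂ c) : Summable fun n => ‖c n‖ ^ 2 := by
  simpa using hc 0

theorem summable_ksq_mul_sq (hc : regular L₁ L₂ c) :
    Summable fun n => ksq (wn L₁ L₂ n) * ‖c n‖ ^ 2 :=
  (hc 1).of_nonneg_of_le (fun n => mul_nonneg (add_nonneg (sq_nonneg _) (sq_nonneg _))
    (sq_nonneg _)) fun n => by
      rw [Real.rpow_one]
      gcongr
      exact le_add_of_nonneg_left zero_le_one

theorem summable_snd_mul_sq (hc : regular L₁ L₂ c) :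
    Summable fun n => ((wn L₁ L₂ n).2 * ‖c n‖) ^ 2 :=
  hc.summable_ksq_mul_sq.of_nonneg_of_le (fun _ => sq_nonneg _) fun n => by
    rw [mul_pow]
    gcongr
    exact snd_sq_le_ksq _

end regular

theorem support_subset_range_mk_zero {E : Type*} [Zero E] {f : ℤ × ℤ → E}
    (hf : ∀ n : ℤ × ℤ, n.1 ≠ 0 → f n = 0) : Function.support f ⊆ Set.range (Prod.mk 0) :=
  fun n hn => ⟨n.2, Prod.ext (not_not.1 fun h => hn (hf n h)).symm rfl⟩

theorem summable_and_tsum_norm_le_of_zonal (hL₁ : 0 < L₁) (hL₂ : 0 < L₂) {b : ℤ × ℤ → ℂ}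
    (hb : regular L₁ L₂ b) (hb0 : b 0 = 0) (hzonal : ∀ n : ℤ × ℤ, n.1 ≠ 0 → b n = 0) :
    Summable (fun n => ‖b n‖) ∧
      ∑' n, ‖b n‖ ≤ 3 / √(2 * π * L₁) * √√(hsq L₁ L₂ 0 b) * √√(hsq L₁ L₂ 0 (dy L₁ L₂ b)) := by
  have hinj := Prod.mk_right_injective (β := ℤ) (0 : ℤ)
  have hsupp : ∀ {f : ℤ × ℤ → ℝ}, (∀ n, b n = 0 → f n = 0) →
      Function.support f ⊆ Set.range (Prod.mk 0) := fun hf =>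
    support_subset_range_mk_zero fun n hn => hf n (hzonal n hn)
  have hwn : ∀ m : ℤ, (wn L₁ L₂ (0, m)).2 = 2 * π / L₂ * m := fun m => by
    simp only [wn]; ring
  have hY : Summable fun m : ℤ => (m : ℝ) ^ 2 * ‖b (0, m)‖ ^ 2 := by
    refine ((hb.summable_snd_mul_sq.comp_injective hinj).mul_left ((L₂ / (2 * π)) ^ 2)).congr
      fun m => ?_
    simp only [Function.comp, hwn]
    field_simp
  obtain ⟨hc, hc_le⟩ := Int.summable_and_tsum_le_agmon (c := fun m => ‖b (0, m)‖)
    (fun _ => norm_nonneg _) (norm_eq_zero.2 hb0) (hb.summable_sq.comp_injective hinj) hY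
  set X := ∑' m : ℤ, ‖b (0, m)‖ ^ 2
  set Y := ∑' m : ℤ, (m : ℝ) ^ 2 * ‖b (0, m)‖ ^ 2
  have hX_eq : hsq L₁ L₂ 0 b = L₁ * L₂ * X := by
    rw [hsq_zero, ← hinj.tsum_eq (hsupp fun n hn => by simp [hn])]
  have hY_eq : hsq L₁ L₂ 0 (dy L₁ L₂ b) = L₁ * L₂ * ((2 * π / L₂) ^ 2 * Y) := by
    rw [hsq_zero_dy, ← hinj.tsum_eq (hsupp fun n hn => by simp [hn])]
    exact congrArg _ ((tsum_congr fun m => by rw [hwn]; ring).trans tsum_mul_left)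
  have hprod : hsq L₁ L₂ 0 b * hsq L₁ L₂ 0 (dy L₁ L₂ b) = (2 * π * L₁) ^ 2 * (X * Y) := by
    rw [hX_eq, hY_eq]
    field_simp
  have hsqrt :
      √√(hsq L₁ L₂ 0 b) * √√(hsq L₁ L₂ 0 (dy L₁ L₂ b)) = √(2 * π * L₁) * √√(X * Y) := by
    rw [← Real.sqrt_mul (Real.sqrt_nonneg _), ← Real.sqrt_mul (by rw [hX_eq]; positivity), hprod,
      Real.sqrt_mul (by positivity), Real.sqrt_sq (by positivity), Real.sqrt_mul (by positivity)]
  refine ⟨(hinj.summable_iff fun n hn => ?_).1 hc, ?_⟩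
  · by_contra h
    exact hn (hsupp (f := fun n => ‖b n‖) (fun n hn => by simp [hn]) h)
  · rw [← hinj.tsum_eq (hsupp fun n hn => by simp [hn]), mul_assoc, hsqrt]
    refine hc_le.trans_eq ?_
    field_simp

/-- `(B_Ω(ω̃, ω̃), ω̄)` at time `t` for `ω̃ = a`, `ω̄ = b`. -/
def bOmegaPairing (L₁ L₂ t ε : ℝ) (a b : ℤ × ℤ → ℂ) : ℂ :=
  ((L₁ * L₂ : ℝ) : ℂ) / (2 * Complex.I) *
    ∑' p : {q : (ℤ × ℤ) × (ℤ × ℤ) //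
        q.1.1 ≠ 0 ∧ q.2.1 ≠ 0 ∧ (q.1 + q.2).1 = 0 ∧ Om L₁ L₂ q.1 + Om L₁ L₂ q.2 ≠ 0},
      (((wn L₁ L₂ (p.1.1 + p.1.2)).2 : ℝ) : ℂ) * a p.1.1 * a p.1.2 *
        (starRingEnd ℂ) (b (p.1.1 + p.1.2)) *
        Complex.exp (-Complex.I * ((Om L₁ L₂ p.1.1 + Om L₁ L₂ p.1.2 : ℝ) : ℂ) * ((t : ℝ) : ℂ) /
          ((ε : ℝ) : ℂ))

theorem norm_exp_neg_I_mul_div (r t ε : ℝ) :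
    ‖Complex.exp (-Complex.I * (r : ℂ) * (t : ℂ) / (ε : ℂ))‖ = 1 := by
  rw [Complex.norm_exp]
  simp

theorem norm_bOmegaPairing_le (hM : 0 ≤ L₁ * L₂) (t ε : ℝ) {a b : ℤ × ℤ → ℂ}
    (ha : regular L₁ L₂ a) (hb : Summable fun n => ‖b n‖) :
    ‖bOmegaPairing L₁ L₂ t ε a b‖ ≤ √(hsq L₁ L₂ 0 a) * √(hsq L₁ L₂ 1 a) * ∑' n, ‖b n‖ := by
  obtain ⟨hF, hF_le⟩ := summable_and_tsum_abs_mul_mul_apply_add_le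
    (w := fun n => (wn L₁ L₂ n).2) (fun j k => by simp only [wn_add_snd]; exact abs_add_le _ _)
    (fun n => norm_nonneg (a n)) (fun n => norm_nonneg (b n)) ha.summable_sq
    ha.summable_snd_mul_sq hb
  set f : (ℤ × ℤ) × (ℤ × ℤ) → ℂ := fun q =>
    (((wn L₁ L₂ (q.1 + q.2)).2 : ℝ) : ℂ) * a q.1 * a q.2 * (starRingEnd ℂ) (b (q.1 + q.2)) *
    Complex.exp (-Complex.I * ((Om L₁ L₂ q.1 + Om L₁ L₂ q.2 : ℝ) : ℂ) * ((t : ℝ) : ℂ) /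
      ((ε : ℝ) : ℂ))
  have hf : ∀ q, ‖f q‖ = |(wn L₁ L₂ (q.1 + q.2)).2| * ‖a q.1‖ * ‖a q.2‖ * ‖b (q.1 + q.2)‖ :=
    fun q => by simp only [f, norm_mul, norm_exp_neg_I_mul_div, Complex.norm_real,
      Real.norm_eq_abs, RCLike.norm_conj, mul_one]
  have hf_sum : Summable fun q => ‖f q‖ := by simpa only [hf] using hF
  have hK : ∑' n, ((wn L₁ L₂ n).2 * ‖a n‖) ^ 2 ≤ ∑' n, ksq (wn L₁ L₂ n) * ‖a n‖ ^ 2 :=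
    ha.summable_snd_mul_sq.tsum_le_tsum (fun n => by rw [mul_pow]; gcongr; exact snd_sq_le_ksq _)
      ha.summable_ksq_mul_sq
  calc ‖bOmegaPairing L₁ L₂ t ε a b‖
      = L₁ * L₂ / 2 * ‖∑' p : {q : (ℤ × ℤ) × (ℤ × ℤ) //
          q.1.1 ≠ 0 ∧ q.2.1 ≠ 0 ∧ (q.1 + q.2).1 = 0 ∧ Om L₁ L₂ q.1 + Om L₁ L₂ q.2 ≠ 0},
            f p.1‖ := by
        simp only [bOmegaPairing, norm_mul, norm_div, Complex.norm_real, Real.norm_of_nonneg hM,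
          Complex.norm_I, mul_one, Complex.norm_ofNat]
        rfl
    _ ≤ L₁ * L₂ / 2 * ∑' q, ‖f q‖ := by
        gcongr
        exact (norm_tsum_le_tsum_norm (hf_sum.subtype _)).trans
          (Summable.tsum_subtype_le (fun q => ‖f q‖) _ (fun _ => norm_nonneg _) hf_sum)
    _ ≤ L₁ * L₂ / 2 * (2 * √(∑' n, ((wn L₁ L₂ n).2 * ‖a n‖) ^ 2) * √(∑' n, ‖a n‖ ^ 2) *
          ∑' n, ‖b n‖) := by
        simp only [hf]
        gcongr
    _ ≤ √(hsq L₁ L₂ 0 a) * √(hsq L₁ L₂ 1 a) * ∑' n, ‖b n‖ := by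
        rw [hsq_zero, hsq_one, Real.sqrt_mul hM, Real.sqrt_mul hM]
        calc _ = √(L₁ * L₂) * √(L₁ * L₂) * √(∑' n, ((wn L₁ L₂ n).2 * ‖a n‖) ^ 2) *
              √(∑' n, ‖a n‖ ^ 2) * ∑' n, ‖b n‖ := by rw [Real.mul_self_sqrt hM]; ring
          _ ≤ √(L₁ * L₂) * √(L₁ * L₂) * √(∑' n, ksq (wn L₁ L₂ n) * ‖a n‖ ^ 2) *
              √(∑' n, ‖a n‖ ^ 2) * ∑' n, ‖b n‖ := by
            have : 0 ≤ ∑' n, ‖b n‖ := tsum_nonneg fun n => norm_nonneg _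
            gcongr
          _ = _ := by ring

end Torus

/-- the bound on `(B_Ω(ω̃,ω̃), ω̄)`, (3.26) of the paper.  There is
`c > 0` depending only on `M` such that for every `t ∈ ℝ`, `ε > 0`, every smooth zero-mean
real `ω̃` with Fourier support in `{k₁ ≠ 0}` and every smooth zero-mean zonal `ω̄`:
`|(B_Ω(ω̃,ω̃), ω̄)| ≤ c ‖ω̃‖ ‖∇ω̃‖ ‖ω̄‖^{1/2} ‖∂_y ω̄‖^{1/2}`, where
`(B_Ω(ω̃,ω̃), ω̄) = (|M|/2i) ∑' l₂ ω̃_j ω̃_k conj(ω̄_l) e^{−i(Ω_j+Ω_k)t/ε}`,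
summing over nonresonant pairs `j₁ ≠ 0`, `k₁ ≠ 0`, `l = j + k`, `l₁ = 0`, `Ω_j + Ω_k ≠ 0`. -/
theorem statement13 (L₁ L₂ : ℝ) (hL₁ : 0 < L₁) (hL₂ : 0 < L₂) :
    ∃ c : ℝ, 0 < c ∧
      ∀ (t ε : ℝ), 0 < ε →
        ∀ a b : ℤ × ℤ → ℂ,
          realField a → regular L₁ L₂ a → (∀ n : ℤ × ℤ, n.1 = 0 → a n = 0) →
          realField b → regular L₁ L₂ b → b 0 = 0 →
          (∀ n : ℤ × ℤ, n.1 ≠ 0 → b n = 0) →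
          ‖((L₁ * L₂ : ℝ) : ℂ) / (2 * Complex.I) *
              ∑' p : {q : (ℤ × ℤ) × (ℤ × ℤ) //
                  q.1.1 ≠ 0 ∧ q.2.1 ≠ 0 ∧ (q.1 + q.2).1 = 0 ∧
                    Om L₁ L₂ q.1 + Om L₁ L₂ q.2 ≠ 0},
                (((wn L₁ L₂ (p.1.1 + p.1.2)).2 : ℝ) : ℂ) * a p.1.1 * a p.1.2 *
                  (starRingEnd ℂ) (b (p.1.1 + p.1.2)) *
                  Complex.exp (-Complex.I *
                    ((Om L₁ L₂ p.1.1 + Om L₁ L₂ p.1.2 : ℝ) : ℂ) * ((t : ℝ) : ℂ) /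
                      ((ε : ℝ) : ℂ))‖
            ≤ c * Real.sqrt (hsq L₁ L₂ 0 a) * Real.sqrt (hsq L₁ L₂ 1 a) *
                Real.sqrt (Real.sqrt (hsq L₁ L₂ 0 b)) *
                Real.sqrt (Real.sqrt (hsq L₁ L₂ 0 (dy L₁ L₂ b))) := by
  refine ⟨3 / √(2 * π * L₁), by positivity, fun t ε _ a b _ ha _ _ hb hb0 hzonal => ?_⟩
  obtain ⟨hb₁, hb₁_le⟩ := summable_and_tsum_norm_le_of_zonal hL₁ hL₂ hb hb0 hzonal
  calc _ ≤ √(hsq L₁ L₂ 0 a) * √(hsq L₁ L₂ 1 a) * ∑' n, ‖b n‖ :=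
        norm_bOmegaPairing_le (mul_pos hL₁ hL₂).le t ε ha hb₁
    _ ≤ √(hsq L₁ L₂ 0 a) * √(hsq L₁ L₂ 1 a) * (3 / √(2 * π * L₁) *
          √√(hsq L₁ L₂ 0 b) * √√(hsq L₁ L₂ 0 (dy L₁ L₂ b))) := by gcongr
    _ = _ := by ring

end
end

section
/- There exists a constant c > 0 depending only on M such that for every real κ ≥ 2 and every smooth M-periodic zero-mean function u with Fourier coefficients (u_k)_{k ∈ Z_L}: writing u^< := ∑_{0<|k|<κ} u_k e^{i k·x} and u^> := ∑_{|k|≥κ} u_k e^{i k·x}, one has ‖u‖_{L^∞} ≤ c·‖∇u^<‖_{L²}·(1 + log κ)^{1/2} + c·‖Δu^>‖_{L²}/κ. -/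
noncomputable section

open scoped Real

/-!
`‖u‖_{L^∞}` is at most the `ℓ¹` norm `∑ |u_k|` of the Fourier coefficients. Split this sum at
`|k| = κ` and apply Cauchy–Schwarz with weights `|k|²` and `|k|⁴`: the two pieces are bounded by
`(∑_{0<|k|<κ} |k|⁻²)^{1/2} ‖∇u^<‖` and `(∑_{|k|≥κ} |k|⁻⁴)^{1/2} ‖Δu^>‖`, up to `|M|^{-1/2}`.
Since `|k| ≥ c₀ |n|` for the integer index `n`, both lattice sums are summed row by row, using
`∑_{y ∈ ℤ} (α² + y²)⁻¹ ≤ 2/α² + π/α` (comparison with `∫ dx/(α² + x²)`). For the first sum the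
row at height `x` has `α ≍ 1 + |x|` and the rows with `|x| ≤ κ/c₀` add up to a harmonic sum, hence
`log κ`; for the second, `|k|⁻⁴` is dominated by the product of two rows with `α = κ/c₀`, hence
`κ⁻²`.
-/

open Finset Real

theorem Finset.sum_natAbs_le_two_mul_sum_image (X : Finset ℤ) {g : ℕ → ℝ} (hg : ∀ k, 0 ≤ g k) :
    ∑ x ∈ X, g x.natAbs ≤ 2 * ∑ k ∈ X.image Int.natAbs, g k := by
  rw [sum_comp, mul_sum]
  refine sum_le_sum fun k _ => ?_
  rw [nsmul_eq_mul]
  have hfiber : {x ∈ X | x.natAbs = k} ⊆ {(k : ℤ), -(k : ℤ)} := fun x hx => by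
    simp only [mem_filter, mem_insert, mem_singleton] at hx ⊢
    omega
  gcongr
  · exact hg k
  · exact_mod_cast (card_le_card hfiber).trans card_le_two

theorem Finset.sum_le_sum_image_fst_sum_image_snd {α β : Type*} [DecidableEq α] [DecidableEq β]
    {s : Finset (α × β)} {f : α × β → ℝ} (hf : ∀ n, 0 ≤ f n) :
    ∑ n ∈ s, f n ≤ ∑ x ∈ s.image Prod.fst, ∑ y ∈ s.image Prod.snd, f (x, y) := by
  rw [← sum_product]
  exact sum_le_sum_of_subset_of_nonneg subset_product fun n _ _ => hf n

theorem Nat.cast_natAbs_sq {R : Type*} [Ring R] (x : ℤ) : (x.natAbs : R) ^ 2 = (x : R) ^ 2 := by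
  rw [← Int.cast_natCast, ← Int.cast_pow, Int.natAbs_sq, Int.cast_pow]

theorem sum_range_inv_sq_add_succ_sq_le {α : ℝ} (hα : 0 < α) (n : ℕ) :
    ∑ i ∈ range n, (α ^ 2 + ((i + 1 : ℕ) : ℝ) ^ 2)⁻¹ ≤ π / (2 * α) := by
  have hanti : AntitoneOn (fun x : ℝ => (α ^ 2 + x ^ 2)⁻¹) (Set.Icc 0 (0 + n)) :=
    fun x hx y _ hxy => by dsimp only; gcongr; exact hx.1
  have hint := hanti.sum_le_integral
  simp only [zero_add] at hint
  rw [integral_inv_sq_add_sq hα.ne', zero_div, arctan_zero, sub_zero] at hint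
  calc _ ≤ α⁻¹ * arctan (n / α) := hint
    _ ≤ α⁻¹ * (π / 2) := by gcongr; exact (arctan_lt_pi_div_two _).le
    _ = π / (2 * α) := by field_simp

theorem Finset.sum_inv_sq_add_natCast_sq_le {α : ℝ} (hα : 0 < α) (K : Finset ℕ) :
    ∑ k ∈ K, (α ^ 2 + (k : ℝ) ^ 2)⁻¹ ≤ (α ^ 2)⁻¹ + π / (2 * α) := by
  have hK : K ⊆ range (K.sup id + 1) := fun k hk =>
    mem_range.2 (Nat.lt_succ_of_le (le_sup (f := id) hk))
  calc _ ≤ ∑ k ∈ range (K.sup id + 1), (α ^ 2 + (k : ℝ) ^ 2)⁻¹ :=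
        sum_le_sum_of_subset_of_nonneg hK fun _ _ _ => by positivity
    _ = ∑ i ∈ range (K.sup id), (α ^ 2 + ((i + 1 : ℕ) : ℝ) ^ 2)⁻¹ + (α ^ 2)⁻¹ := by
        rw [sum_range_succ']; simp
    _ ≤ _ := by linarith [sum_range_inv_sq_add_succ_sq_le hα (K.sup id)]

theorem Finset.sum_inv_sq_add_intCast_sq_le {α : ℝ} (hα : 0 < α) (Y : Finset ℤ) :
    ∑ y ∈ Y, (α ^ 2 + (y : ℝ) ^ 2)⁻¹ ≤ 2 / α ^ 2 + π / α := by
  have h := Y.sum_natAbs_le_two_mul_sum_image (g := fun k => (α ^ 2 + (k : ℝ) ^ 2)⁻¹)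
    fun _ => by positivity
  simp only [Nat.cast_natAbs_sq] at h
  calc _ ≤ _ := h
    _ ≤ 2 * ((α ^ 2)⁻¹ + π / (2 * α)) := by gcongr; exact sum_inv_sq_add_natCast_sq_le hα _
    _ = 2 / α ^ 2 + π / α := by field_simp

theorem Finset.sum_inv_one_add_natAbs_le_log {N : ℕ} (X : Finset ℤ) (hX : ∀ x ∈ X, x.natAbs ≤ N) :
    ∑ x ∈ X, (1 + (x.natAbs : ℝ))⁻¹ ≤ 2 * (1 + Real.log (N + 1)) := by
  have hsub : X.image Int.natAbs ⊆ range (N + 1) := fun k hk => by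
    obtain ⟨x, hx, rfl⟩ := mem_image.1 hk
    exact mem_range.2 (Nat.lt_succ_of_le (hX x hx))
  have hharm : ∑ k ∈ range (N + 1), (1 + (k : ℝ))⁻¹ = harmonic (N + 1) := by
    push_cast [harmonic]
    exact sum_congr rfl fun k _ => by rw [add_comm]
  calc _ ≤ 2 * ∑ k ∈ X.image Int.natAbs, (1 + (k : ℝ))⁻¹ :=
        X.sum_natAbs_le_two_mul_sum_image fun _ => by positivity
    _ ≤ 2 * ∑ k ∈ range (N + 1), (1 + (k : ℝ))⁻¹ := by gcongr
    _ ≤ 2 * (1 + Real.log (N + 1)) := by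
        rw [hharm]; gcongr; exact_mod_cast harmonic_le_one_add_log (N + 1)

theorem Finset.sum_inv_one_add_sq_add_sq_le_log {N : ℕ} (s : Finset (ℤ × ℤ))
    (hs : ∀ n ∈ s, n.1.natAbs ≤ N) :
    ∑ n ∈ s, (1 + (n.1 : ℝ) ^ 2 + (n.2 : ℝ) ^ 2)⁻¹ ≤ 32 * (1 + Real.log (N + 1)) := by
  have hrow (x : ℤ) (Y : Finset ℤ) :
      ∑ y ∈ Y, (1 + (x : ℝ) ^ 2 + (y : ℝ) ^ 2)⁻¹ ≤ 16 * (1 + (x.natAbs : ℝ))⁻¹ := by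
    obtain ⟨α, hα⟩ : ∃ α, α = (1 + (x.natAbs : ℝ)) / 2 := ⟨_, rfl⟩
    have hx : 0 ≤ (x.natAbs : ℝ) := Nat.cast_nonneg _
    have hα₀ : 1 / 2 ≤ α := by rw [hα]; linarith
    have hαx : α ^ 2 ≤ 1 + (x : ℝ) ^ 2 := by rw [hα, ← Nat.cast_natAbs_sq]; nlinarith
    calc _ ≤ ∑ y ∈ Y, (α ^ 2 + (y : ℝ) ^ 2)⁻¹ := sum_le_sum fun y _ => by gcongr
      _ ≤ 2 / α ^ 2 + π / α := sum_inv_sq_add_intCast_sq_le (by linarith) Y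
      _ ≤ 4 / α + 4 / α := by
          gcongr ?_ + ?_
          · rw [div_le_div_iff₀ (by positivity) (by linarith)]; nlinarith
          · exact div_le_div_of_nonneg_right pi_le_four (by linarith)
      _ = 16 * (1 + (x.natAbs : ℝ))⁻¹ := by rw [hα]; field_simp; ring
  have hX : ∀ x ∈ s.image Prod.fst, x.natAbs ≤ N := fun x hx => by
    obtain ⟨n, hn, rfl⟩ := mem_image.1 hx
    exact hs n hn
  calc _ ≤ ∑ x ∈ s.image Prod.fst, ∑ y ∈ s.image Prod.snd, (1 + (x : ℝ) ^ 2 + (y : ℝ) ^ 2)⁻¹ :=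
        sum_le_sum_image_fst_sum_image_snd fun _ => by positivity
    _ ≤ ∑ x ∈ s.image Prod.fst, 16 * (1 + (x.natAbs : ℝ))⁻¹ := sum_le_sum fun x _ => hrow x _
    _ ≤ 16 * (2 * (1 + Real.log (N + 1))) := by
        rw [← mul_sum]; gcongr; exact sum_inv_one_add_natAbs_le_log _ hX
    _ = 32 * (1 + Real.log (N + 1)) := by ring

theorem Finset.sum_inv_mul_sq_add_sq_le {r : ℝ} (hr : 0 < r) (s : Finset (ℤ × ℤ)) :
    ∑ n ∈ s, ((r ^ 2 + (n.1 : ℝ) ^ 2) * (r ^ 2 + (n.2 : ℝ) ^ 2))⁻¹ ≤ (2 / r ^ 2 + π / r) ^ 2 := by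
  calc _ ≤ ∑ x ∈ s.image Prod.fst, ∑ y ∈ s.image Prod.snd,
          ((r ^ 2 + (x : ℝ) ^ 2) * (r ^ 2 + (y : ℝ) ^ 2))⁻¹ :=
        sum_le_sum_image_fst_sum_image_snd (f := fun n : ℤ × ℤ =>
          ((r ^ 2 + (n.1 : ℝ) ^ 2) * (r ^ 2 + (n.2 : ℝ) ^ 2))⁻¹) fun _ => by positivity
    _ = (∑ x ∈ s.image Prod.fst, (r ^ 2 + (x : ℝ) ^ 2)⁻¹) *
          ∑ y ∈ s.image Prod.snd, (r ^ 2 + (y : ℝ) ^ 2)⁻¹ := by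
        simp only [sum_mul_sum, mul_inv]
    _ ≤ (2 / r ^ 2 + π / r) ^ 2 := by
        rw [sq (2 / r ^ 2 + π / r)]
        exact mul_le_mul (sum_inv_sq_add_intCast_sq_le hr _) (sum_inv_sq_add_intCast_sq_le hr _)
          (sum_nonneg fun _ _ => by positivity) (by positivity)

theorem one_le_sq_add_sq_of_ne_zero {n : ℤ × ℤ} (hn : n ≠ 0) :
    1 ≤ (n.1 : ℝ) ^ 2 + (n.2 : ℝ) ^ 2 := by
  have hxy : n.1 ≠ 0 ∨ n.2 ≠ 0 := by
    by_contra! h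
    exact hn (Prod.ext h.1 h.2)
  have hZ : (1 : ℤ) ≤ n.1 ^ 2 + n.2 ^ 2 := by
    rcases hxy with h | h
    · nlinarith [pow_pos (abs_pos.2 h) 2, sq_abs n.1, sq_nonneg n.2]
    · nlinarith [pow_pos (abs_pos.2 h) 2, sq_abs n.2, sq_nonneg n.1]
  exact_mod_cast hZ

section LatticeWeight

variable {q : ℤ × ℤ → ℝ} {c : ℝ}

theorem exists_sum_inv_le_mul_one_add_log (hc : 0 < c)
    (hq : ∀ n, c ^ 2 * ((n.1 : ℝ) ^ 2 + (n.2 : ℝ) ^ 2) ≤ q n) :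
    ∃ K, ∀ κ ≥ 1, ∀ s : Finset (ℤ × ℤ), (∀ n ∈ s, n ≠ 0 ∧ q n < κ ^ 2) →
      ∑ n ∈ s, (q n)⁻¹ ≤ K * (1 + Real.log κ) := by
  set L := Real.log (c⁻¹ + 1)
  have hL : 0 ≤ L := Real.log_nonneg (by linarith [inv_pos.2 hc])
  refine ⟨64 / c ^ 2 * (1 + L), fun κ hκ s hs => ?_⟩
  set N := ⌊κ / c⌋₊
  have hN : ∀ n ∈ s, n.1.natAbs ≤ N := fun n hn => by
    have hsq : ((n.1.natAbs : ℝ) * c) ^ 2 < κ ^ 2 := by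
      rw [mul_pow, Nat.cast_natAbs_sq]
      nlinarith [hq n, (hs n hn).2, sq_nonneg (n.2 : ℝ), sq_nonneg c]
    exact Nat.le_floor ((le_div_iff₀ hc).2 (lt_of_pow_lt_pow_left₀ 2 (by linarith) hsq).le)
  have hpt : ∀ n ∈ s, (q n)⁻¹ ≤ 2 / c ^ 2 * (1 + (n.1 : ℝ) ^ 2 + (n.2 : ℝ) ^ 2)⁻¹ := by
    intro n hn
    have h1 := one_le_sq_add_sq_of_ne_zero (hs n hn).1
    rw [show 2 / c ^ 2 * (1 + (n.1 : ℝ) ^ 2 + (n.2 : ℝ) ^ 2)⁻¹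
        = (c ^ 2 * (1 + (n.1 : ℝ) ^ 2 + (n.2 : ℝ) ^ 2) / 2)⁻¹ by field_simp]
    exact inv_anti₀ (by positivity) (by nlinarith [hq n, sq_nonneg c])
  have hlog : 1 + Real.log (N + 1) ≤ (1 + L) * (1 + Real.log κ) := by
    have hN1 : (N : ℝ) + 1 ≤ κ * (c⁻¹ + 1) := by
      calc (N : ℝ) + 1 ≤ κ / c + κ := by
            linarith [Nat.floor_le (div_nonneg (by linarith) hc.le : 0 ≤ κ / c)]
        _ = κ * (c⁻¹ + 1) := by ring
    have : Real.log (N + 1) ≤ Real.log κ + L := by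
      rw [← Real.log_mul (by linarith) (by positivity)]
      exact Real.log_le_log (by positivity) hN1
    nlinarith [Real.log_nonneg hκ]
  calc ∑ n ∈ s, (q n)⁻¹ ≤ ∑ n ∈ s, 2 / c ^ 2 * (1 + (n.1 : ℝ) ^ 2 + (n.2 : ℝ) ^ 2)⁻¹ :=
        sum_le_sum hpt
    _ ≤ 2 / c ^ 2 * (32 * (1 + Real.log (N + 1))) := by
        rw [← mul_sum]; gcongr; exact sum_inv_one_add_sq_add_sq_le_log s hN
    _ ≤ 2 / c ^ 2 * (32 * ((1 + L) * (1 + Real.log κ))) := by gcongr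
    _ = 64 / c ^ 2 * (1 + L) * (1 + Real.log κ) := by ring

theorem exists_sum_inv_sq_le_div_sq (hc : 0 < c)
    (hq : ∀ n, c ^ 2 * ((n.1 : ℝ) ^ 2 + (n.2 : ℝ) ^ 2) ≤ q n) :
    ∃ K, ∀ κ ≥ 1, ∀ s : Finset (ℤ × ℤ), (∀ n ∈ s, κ ^ 2 ≤ q n) →
      ∑ n ∈ s, (q n ^ 2)⁻¹ ≤ K / κ ^ 2 := by
  refine ⟨4 * (2 * c + π) ^ 2 / c ^ 2, fun κ hκ s hs => ?_⟩
  have hκ0 : 0 < κ := by linarith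
  set r := κ / c with hr
  have hr0 : 0 < r := div_pos hκ0 hc
  -- `2 q ≥ κ² + c²|n|²`, and `(κ² + c²x²)(κ² + c²y²) ≤ (κ² + c²x² + c²y²)²`
  have hpt : ∀ n ∈ s, (q n ^ 2)⁻¹
      ≤ 4 / c ^ 4 * ((r ^ 2 + (n.1 : ℝ) ^ 2) * (r ^ 2 + (n.2 : ℝ) ^ 2))⁻¹ := by
    intro n hn
    have e : c ^ 4 * ((r ^ 2 + (n.1 : ℝ) ^ 2) * (r ^ 2 + (n.2 : ℝ) ^ 2))
        = (κ ^ 2 + c ^ 2 * (n.1 : ℝ) ^ 2) * (κ ^ 2 + c ^ 2 * (n.2 : ℝ) ^ 2) := by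
      rw [hr]; field_simp
    rw [show 4 / c ^ 4 * ((r ^ 2 + (n.1 : ℝ) ^ 2) * (r ^ 2 + (n.2 : ℝ) ^ 2))⁻¹
        = (c ^ 4 * ((r ^ 2 + (n.1 : ℝ) ^ 2) * (r ^ 2 + (n.2 : ℝ) ^ 2)) / 4)⁻¹ by field_simp, e]
    refine inv_anti₀ (by positivity) ?_
    have hx := mul_nonneg (sq_nonneg c) (sq_nonneg (n.1 : ℝ))
    have hy := mul_nonneg (sq_nonneg c) (sq_nonneg (n.2 : ℝ))
    nlinarith [hq n, hs n hn, mul_nonneg hx hy]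
  have hrsum : 2 / r ^ 2 + π / r ≤ c * (2 * c + π) / κ := by
    rw [show 2 / r ^ 2 + π / r = c * (2 * c / κ + π) / κ by rw [hr]; field_simp]
    gcongr
    exact div_le_self (by positivity) hκ
  calc ∑ n ∈ s, (q n ^ 2)⁻¹
      ≤ ∑ n ∈ s, 4 / c ^ 4 * ((r ^ 2 + (n.1 : ℝ) ^ 2) * (r ^ 2 + (n.2 : ℝ) ^ 2))⁻¹ :=
        sum_le_sum hpt
    _ ≤ 4 / c ^ 4 * (c * (2 * c + π) / κ) ^ 2 := by
        rw [← mul_sum]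
        gcongr
        exact (sum_inv_mul_sq_add_sq_le hr0 s).trans (pow_le_pow_left₀ (by positivity) hrsum 2)
    _ = 4 * (2 * c + π) ^ 2 / c ^ 2 / κ ^ 2 := by field_simp

end LatticeWeight

theorem sum_norm_le_sqrt_mul_sqrt_tsum {ι E : Type*} [NormedAddCommGroup E] {v : ι → E}
    {w : ι → ℝ} {W : ℝ} (hw : ∀ i, v i ≠ 0 → 0 < w i)
    (hW : ∀ s : Finset ι, (∀ i ∈ s, v i ≠ 0) → ∑ i ∈ s, (w i)⁻¹ ≤ W)
    (hv : Summable fun i => w i * ‖v i‖ ^ 2) (s : Finset ι) :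
    ∑ i ∈ s, ‖v i‖ ≤ √W * √(∑' i, w i * ‖v i‖ ^ 2) := by
  classical
  have hnn : ∀ i, 0 ≤ w i * ‖v i‖ ^ 2 := fun i => by
    by_cases h : v i = 0
    · simp [h]
    · exact mul_nonneg (hw i h).le (sq_nonneg _)
  set t := s.filter fun i => v i ≠ 0
  have ht : ∀ i ∈ t, v i ≠ 0 := fun i hi => (mem_filter.1 hi).2
  have hcs : (∑ i ∈ t, ‖v i‖) ^ 2 ≤ (∑ i ∈ t, (w i)⁻¹) * ∑ i ∈ t, w i * ‖v i‖ ^ 2 :=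
    sum_sq_le_sum_mul_sum_of_sq_le_mul t (fun i hi => (inv_pos.2 (hw i (ht i hi))).le)
      (fun i _ => hnn i) fun i hi => by
        rw [← mul_assoc, inv_mul_cancel₀ (hw i (ht i hi)).ne', one_mul]
  rw [← sum_filter_of_ne fun i _ h => norm_ne_zero_iff.1 h,
    ← Real.sqrt_mul' _ (tsum_nonneg hnn)]
  refine Real.le_sqrt_of_sq_le (hcs.trans ?_)
  exact mul_le_mul (hW t ht) (hv.sum_le_tsum t fun i _ => hnn i) (sum_nonneg fun i _ => hnn i)
    ((sum_nonneg fun i hi => (inv_pos.2 (hw i (ht i hi))).le).trans (hW t ht))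

theorem linf_le_of_forall_sum_norm_le {L₁ L₂ C : ℝ} {u : ℤ × ℤ → ℂ}
    (h : ∀ s : Finset (ℤ × ℤ), ∑ n ∈ s, ‖u n‖ ≤ C) : linf L₁ L₂ u ≤ C := by
  have hu : Summable fun n => ‖u n‖ := summable_of_sum_le (fun _ => norm_nonneg _) h
  refine ciSup_le fun x => ?_
  calc _ ≤ ∑' n, ‖u n * Complex.exp (Complex.I * ((dotR (wn L₁ L₂ n) x : ℝ) : ℂ))‖ :=
        norm_tsum_le_tsum_norm (by simpa using hu)
    _ = ∑' n, ‖u n‖ := by simp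
    _ ≤ C := Real.tsum_le_of_sum_le (fun _ => norm_nonneg _) h

section Torus

variable {L₁ L₂ : ℝ}

theorem ksq_nonneg (k : ℝ × ℝ) : 0 ≤ ksq k := by unfold ksq; positivity

theorem poin_pos (hL₁ : 0 < L₁) (hL₂ : 0 < L₂) : 0 < poin L₁ L₂ :=
  lt_min (by positivity) (by positivity)

theorem poin_sq_mul_le_ksq_wn (hL₁ : 0 < L₁) (hL₂ : 0 < L₂) (n : ℤ × ℤ) :
    poin L₁ L₂ ^ 2 * ((n.1 : ℝ) ^ 2 + (n.2 : ℝ) ^ 2) ≤ ksq (wn L₁ L₂ n) := by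
  have h₁ : poin L₁ L₂ ^ 2 ≤ (2 * π / L₁) ^ 2 :=
    pow_le_pow_left₀ (poin_pos hL₁ hL₂).le (min_le_left _ _) 2
  have h₂ : poin L₁ L₂ ^ 2 ≤ (2 * π / L₂) ^ 2 :=
    pow_le_pow_left₀ (poin_pos hL₁ hL₂).le (min_le_right _ _) 2
  have e : ksq (wn L₁ L₂ n)
      = (2 * π / L₁) ^ 2 * (n.1 : ℝ) ^ 2 + (2 * π / L₂) ^ 2 * (n.2 : ℝ) ^ 2 := by
    simp only [ksq, wn]; ring
  rw [e]
  nlinarith [sq_nonneg (n.1 : ℝ), sq_nonneg (n.2 : ℝ)]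

theorem ksq_wn_pos (hL₁ : 0 < L₁) (hL₂ : 0 < L₂) {n : ℤ × ℤ} (hn : n ≠ 0) :
    0 < ksq (wn L₁ L₂ n) :=
  lt_of_lt_of_le (mul_pos (pow_pos (poin_pos hL₁ hL₂) 2)
    (one_pos.trans_le (one_le_sq_add_sq_of_ne_zero hn))) (poin_sq_mul_le_ksq_wn hL₁ hL₂ n)

theorem regular.mono {u v : ℤ × ℤ → ℂ} (hu : regular L₁ L₂ u) (hvu : ∀ n, ‖v n‖ ≤ ‖u n‖) :
    regular L₁ L₂ v := fun s =>
  have hw (n : ℤ × ℤ) : 0 ≤ (1 + ksq (wn L₁ L₂ n)) ^ s :=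
    Real.rpow_nonneg (by linarith [ksq_nonneg (wn L₁ L₂ n)]) s
  (hu s).of_nonneg_of_le (fun n => mul_nonneg (hw n) (sq_nonneg _)) fun n =>
    mul_le_mul_of_nonneg_left (pow_le_pow_left₀ (norm_nonneg _) (hvu n) 2) (hw n)

theorem regular.summable_ksq_pow_mul {u : ℤ × ℤ → ℂ} (hu : regular L₁ L₂ u) (m : ℕ) :
    Summable fun n => ksq (wn L₁ L₂ n) ^ m * ‖u n‖ ^ 2 :=
  (hu m).of_nonneg_of_le (fun n => mul_nonneg (pow_nonneg (ksq_nonneg _) m) (sq_nonneg _))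
    fun n => by
      rw [Real.rpow_natCast]
      gcongr
      · exact ksq_nonneg _
      · linarith

theorem exists_sum_norm_le_of_low_frequency (hL₁ : 0 < L₁) (hL₂ : 0 < L₂) :
    ∃ C ≥ 0, ∀ κ ≥ 1, ∀ v : ℤ × ℤ → ℂ, v 0 = 0 → regular L₁ L₂ v →
      (∀ n, v n ≠ 0 → √(ksq (wn L₁ L₂ n)) < κ) → ∀ s : Finset (ℤ × ℤ),
        ∑ n ∈ s, ‖v n‖ ≤ C * √(hsq L₁ L₂ 1 v) * √(1 + Real.log κ) := by
  obtain ⟨K, hK⟩ :=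
    exists_sum_inv_le_mul_one_add_log (poin_pos hL₁ hL₂) (poin_sq_mul_le_ksq_wn hL₁ hL₂)
  refine ⟨√K / √(L₁ * L₂), by positivity, fun κ hκ v hv0 hv hsupp s => ?_⟩
  have hne : ∀ n, v n ≠ 0 → n ≠ 0 := fun n hn h => hn (h ▸ hv0)
  have hlt : ∀ n, v n ≠ 0 → ksq (wn L₁ L₂ n) < κ ^ 2 := fun n hn =>
    (Real.sqrt_lt' (by linarith)).1 (hsupp n hn)
  calc ∑ n ∈ s, ‖v n‖ ≤ √(K * (1 + Real.log κ)) * √(∑' n, ksq (wn L₁ L₂ n) * ‖v n‖ ^ 2) :=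
        sum_norm_le_sqrt_mul_sqrt_tsum (fun n hn => ksq_wn_pos hL₁ hL₂ (hne n hn))
          (fun t ht => hK κ hκ t fun n hn => ⟨hne n (ht n hn), hlt n (ht n hn)⟩)
          (by simpa using hv.summable_ksq_pow_mul 1) s
    _ = √K / √(L₁ * L₂) * √(hsq L₁ L₂ 1 v) * √(1 + Real.log κ) := by
        simp only [hsq, Real.rpow_one]
        rw [Real.sqrt_mul' K (by linarith [Real.log_nonneg hκ]),
          Real.sqrt_mul (mul_pos hL₁ hL₂).le]
        field_simp

theorem exists_sum_norm_le_of_high_frequency (hL₁ : 0 < L₁) (hL₂ : 0 < L₂) :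
    ∃ C ≥ 0, ∀ κ ≥ 1, ∀ v : ℤ × ℤ → ℂ, regular L₁ L₂ v →
      (∀ n, v n ≠ 0 → κ ≤ √(ksq (wn L₁ L₂ n))) → ∀ s : Finset (ℤ × ℤ),
        ∑ n ∈ s, ‖v n‖ ≤ C * √(hsq L₁ L₂ 2 v) / κ := by
  obtain ⟨K, hK⟩ :=
    exists_sum_inv_sq_le_div_sq (poin_pos hL₁ hL₂) (poin_sq_mul_le_ksq_wn hL₁ hL₂)
  refine ⟨√K / √(L₁ * L₂), by positivity, fun κ hκ v hv hsupp s => ?_⟩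
  have hge : ∀ n, v n ≠ 0 → κ ^ 2 ≤ ksq (wn L₁ L₂ n) := fun n hn =>
    (Real.le_sqrt (by linarith) (ksq_nonneg _)).1 (hsupp n hn)
  calc ∑ n ∈ s, ‖v n‖ ≤ √(K / κ ^ 2) * √(∑' n, ksq (wn L₁ L₂ n) ^ 2 * ‖v n‖ ^ 2) :=
        sum_norm_le_sqrt_mul_sqrt_tsum
          (fun n hn => pow_pos ((by positivity : (0 : ℝ) < κ ^ 2).trans_le (hge n hn)) 2)
          (fun t ht => hK κ hκ t fun n hn => hge n (ht n hn)) (hv.summable_ksq_pow_mul 2) s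
    _ = √K / √(L₁ * L₂) * √(hsq L₁ L₂ 2 v) / κ := by
        simp only [hsq, Real.rpow_two]
        rw [Real.sqrt_div' K (by positivity), Real.sqrt_sq (by linarith),
          Real.sqrt_mul (mul_pos hL₁ hL₂).le]
        field_simp

end Torus

/-- the high/low frequency splitting in the Appendix.  There is
`c > 0` depending only on `M` such that for every `κ ≥ 2` and every smooth zero-mean
field `u` on `M`, writing `u^<` and `u^>` for the parts with `0 < |k| < κ` and `|k| ≥ κ`:
`‖u‖_{L^∞} ≤ c ‖∇u^<‖ (1 + log κ)^{1/2} + c ‖Δu^>‖/κ`. -/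
theorem statement17 (L₁ L₂ : ℝ) (hL₁ : 0 < L₁) (hL₂ : 0 < L₂) :
    ∃ c : ℝ, 0 < c ∧
      ∀ κ : ℝ, 2 ≤ κ →
        ∀ u : ℤ × ℤ → ℂ, u 0 = 0 → realField u → regular L₁ L₂ u →
          linf L₁ L₂ u
            ≤ c * Real.sqrt (hsq L₁ L₂ 1 fun n =>
                  if Real.sqrt (ksq (wn L₁ L₂ n)) < κ then u n else 0) *
                Real.sqrt (1 + Real.log κ)
              + c * Real.sqrt (hsq L₁ L₂ 2 fun n =>
                  if κ ≤ Real.sqrt (ksq (wn L₁ L₂ n)) then u n else 0) / κ := by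
  obtain ⟨C₁, hC₁, hlow⟩ := exists_sum_norm_le_of_low_frequency hL₁ hL₂
  obtain ⟨C₂, hC₂, hhigh⟩ := exists_sum_norm_le_of_high_frequency hL₁ hL₂
  refine ⟨C₁ + C₂ + 1, by positivity, fun κ hκ u hu0 _ hu => ?_⟩
  have hκ1 : 1 ≤ κ := by linarith
  set lo := fun n => if √(ksq (wn L₁ L₂ n)) < κ then u n else 0
  set hi := fun n => if κ ≤ √(ksq (wn L₁ L₂ n)) then u n else 0
  have hsplit (n : ℤ × ℤ) : ‖u n‖ = ‖lo n‖ + ‖hi n‖ := by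
    by_cases h : √(ksq (wn L₁ L₂ n)) < κ
    · simp [lo, hi, h, not_le.2 h]
    · simp [lo, hi, h, not_lt.1 h]
  have hlo : regular L₁ L₂ lo := hu.mono fun n => by simp only [lo]; split_ifs <;> simp
  have hhi : regular L₁ L₂ hi := hu.mono fun n => by simp only [hi]; split_ifs <;> simp
  refine linf_le_of_forall_sum_norm_le fun s => ?_
  rw [sum_congr rfl fun n _ => hsplit n, sum_add_distrib]
  gcongr ?_ + ?_
  · refine (hlow κ hκ1 lo (by simp [lo, hu0]) hlo (fun n hn => ?_) s).trans ?_
    · by_contra h; exact hn (if_neg h)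
    · gcongr; linarith
  · refine (hhigh κ hκ1 hi hhi (fun n hn => ?_) s).trans ?_
    · by_contra h; exact hn (if_neg h)
    · gcongr; linarith
end
end
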